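/- arXiv:1910.00776 — 5 statements merged into one kernel-verified Lean document; each statement's English description precedes it below -/
import Mathlib

section
/- If μ is a finitely additive probability charge on a Boolean subalgebra 𝒜 of P(I) and X ⊆ I satisfies sup{μ(A) : A ⊆ X, A ∈ 𝒜} ≤ r ≤ inf{μ(A) : X ⊆ A, A ∈ 𝒜}, then there exists a finitely additive probability charge μ̄ defined on all of P(I) extending μ with μ̄(X) = r. -/
open Set
attribute [local instance] Classical.propDecidable

namespace ChargeExt

variable {I : Type*} {𝒜 : Set (Set I)} {μ : Set I → ℝ}

/-- indicator function -/
noncomputable def ind (S : Set I) : I → ℝ := S.indicator fun _ => 1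

lemma ind_of_mem {S : Set I} {i : I} (h : i ∈ S) : ind S i = 1 := Set.indicator_of_mem h _

lemma ind_of_not_mem {S : Set I} {i : I} (h : i ∉ S) : ind S i = 0 := Set.indicator_of_notMem h _

lemma ind_nonneg (S : Set I) (i : I) : 0 ≤ ind S i := by
  by_cases h : i ∈ S
  · rw [ind_of_mem h]; norm_num
  · rw [ind_of_not_mem h]

lemma abs_ind_le_one (S : Set I) (i : I) : |ind S i| ≤ 1 := by
  by_cases h : i ∈ S
  · rw [ind_of_mem h]; simp
  · rw [ind_of_not_mem h]; simp

lemma alg_empty (h_univ : univ ∈ 𝒜) (h_compl : ∀ A ∈ 𝒜, Aᶜ ∈ 𝒜) : (∅ : Set I) ∈ 𝒜 := by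
  simpa using h_compl _ h_univ

lemma alg_inter (h_compl : ∀ A ∈ 𝒜, Aᶜ ∈ 𝒜) (h_union : ∀ A ∈ 𝒜, ∀ B ∈ 𝒜, A ∪ B ∈ 𝒜)
    {A B : Set I} (hA : A ∈ 𝒜) (hB : B ∈ 𝒜) : A ∩ B ∈ 𝒜 := by
  have : A ∩ B = (Aᶜ ∪ Bᶜ)ᶜ := by simp [Set.compl_union]
  rw [this]
  exact h_compl _ (h_union _ (h_compl _ hA) _ (h_compl _ hB))

lemma alg_biInter (h_univ : univ ∈ 𝒜) (h_compl : ∀ A ∈ 𝒜, Aᶜ ∈ 𝒜)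
    (h_union : ∀ A ∈ 𝒜, ∀ B ∈ 𝒜, A ∪ B ∈ 𝒜)
    {α : Type*} [DecidableEq α] (s : Finset α) (g : α → Set I) (hg : ∀ a ∈ s, g a ∈ 𝒜) :
    (⋂ a ∈ s, g a) ∈ 𝒜 := by
  induction s using Finset.induction_on with
  | empty => simpa using h_univ
  | insert _ _ hnot ih =>
    rw [Finset.set_biInter_insert]
    exact alg_inter h_compl h_union (hg _ (Finset.mem_insert_self _ _))
      (ih fun a ha => hg a (Finset.mem_insert_of_mem ha))

lemma alg_biUnion (h_univ : univ ∈ 𝒜) (h_compl : ∀ A ∈ 𝒜, Aᶜ ∈ 𝒜)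
    (h_union : ∀ A ∈ 𝒜, ∀ B ∈ 𝒜, A ∪ B ∈ 𝒜)
    {α : Type*} [DecidableEq α] (s : Finset α) (g : α → Set I) (hg : ∀ a ∈ s, g a ∈ 𝒜) :
    (⋃ a ∈ s, g a) ∈ 𝒜 := by
  induction s using Finset.induction_on with
  | empty => simpa using alg_empty h_univ h_compl
  | insert _ _ hnot ih =>
    rw [Finset.set_biUnion_insert]
    exact h_union _ (hg _ (Finset.mem_insert_self _ _)) _
      (ih fun a ha => hg a (Finset.mem_insert_of_mem ha))

lemma mu_empty (h_univ : univ ∈ 𝒜) (h_compl : ∀ A ∈ 𝒜, Aᶜ ∈ 𝒜)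
    (hadd : ∀ A ∈ 𝒜, ∀ B ∈ 𝒜, Disjoint A B → μ (A ∪ B) = μ A + μ B) : μ (∅ : Set I) = 0 := by
  have hem := alg_empty h_univ h_compl
  have := hadd ∅ hem ∅ hem (disjoint_bot_left)
  simp at this
  linarith

lemma mu_biUnion (h_univ : univ ∈ 𝒜) (h_compl : ∀ A ∈ 𝒜, Aᶜ ∈ 𝒜)
    (h_union : ∀ A ∈ 𝒜, ∀ B ∈ 𝒜, A ∪ B ∈ 𝒜)
    (hadd : ∀ A ∈ 𝒜, ∀ B ∈ 𝒜, Disjoint A B → μ (A ∪ B) = μ A + μ B)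
    {α : Type*} [DecidableEq α] (s : Finset α) (g : α → Set I) (hg : ∀ a ∈ s, g a ∈ 𝒜)
    (hdisj : ∀ a ∈ s, ∀ b ∈ s, a ≠ b → Disjoint (g a) (g b)) :
    μ (⋃ a ∈ s, g a) = ∑ a ∈ s, μ (g a) := by
  induction s using Finset.induction_on with
  | empty => simpa using mu_empty h_univ h_compl hadd
  | @insert a s hnot ih =>
    rw [Finset.set_biUnion_insert, Finset.sum_insert hnot]
    have hd : Disjoint (g a) (⋃ b ∈ s, g b) := by
      simp only [Set.disjoint_iUnion_right]
      intro b hb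
      exact hdisj a (Finset.mem_insert_self _ _) b (Finset.mem_insert_of_mem hb)
        (fun h => hnot (h ▸ hb))
    rw [hadd _ (hg _ (Finset.mem_insert_self _ _))
      _ (alg_biUnion h_univ h_compl h_union s g fun b hb => hg b (Finset.mem_insert_of_mem hb)) hd,
      ih (fun b hb => hg b (Finset.mem_insert_of_mem hb))
        (fun b hb c hc hbc => hdisj b (Finset.mem_insert_of_mem hb) c (Finset.mem_insert_of_mem hc) hbc)]


/-- the atom of the finite family `s` determined by the subfamily `t`. -/
noncomputable def atom (s t : Finset (Set I)) : Set I :=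
  ⋂ A ∈ s, if A ∈ t then A else Aᶜ

lemma mem_atom_iff {s t : Finset (Set I)} {i : I} :
    i ∈ atom s t ↔ ∀ A ∈ s, i ∈ (if A ∈ t then A else Aᶜ) := by
  simp [atom]

noncomputable def tau (s : Finset (Set I)) (i : I) : Finset (Set I) :=
  s.filter (fun A => i ∈ A)

lemma tau_subset (s : Finset (Set I)) (i : I) : tau s i ⊆ s := Finset.filter_subset _ _

lemma mem_atom_tau (s : Finset (Set I)) (i : I) : i ∈ atom s (tau s i) := by
  rw [mem_atom_iff]
  intro A hA
  by_cases h : i ∈ A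
  · rw [if_pos (by simp [tau, hA, h])]; exact h
  · rw [if_neg (by simp [tau, h])]; exact h

lemma eq_tau_of_mem_atom {s t : Finset (Set I)} {i : I} (ht : t ⊆ s) (hi : i ∈ atom s t) :
    t = tau s i := by
  rw [mem_atom_iff] at hi
  ext A
  simp only [tau, Finset.mem_filter]
  constructor
  · intro hAt
    have := hi A (ht hAt)
    rw [if_pos hAt] at this
    exact ⟨ht hAt, this⟩
  · rintro ⟨hAs, hAi⟩
    by_contra hAt
    have := hi A hAs
    rw [if_neg hAt] at this
    exact this hAi

lemma atom_disjoint {s t t' : Finset (Set I)} (ht : t ⊆ s) (ht' : t' ⊆ s) (hne : t ≠ t') :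
    Disjoint (atom s t) (atom s t') := by
  rw [Set.disjoint_left]
  intro i hi hi'
  exact hne ((eq_tau_of_mem_atom ht hi).trans (eq_tau_of_mem_atom ht' hi').symm)

lemma atom_mem_alg (h_univ : univ ∈ 𝒜) (h_compl : ∀ A ∈ 𝒜, Aᶜ ∈ 𝒜)
    (h_union : ∀ A ∈ 𝒜, ∀ B ∈ 𝒜, A ∪ B ∈ 𝒜)
    {s : Finset (Set I)} (hs : ∀ A ∈ s, A ∈ 𝒜) (t : Finset (Set I)) : atom s t ∈ 𝒜 := by
  apply alg_biInter h_univ h_compl h_union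
  intro A hA
  by_cases h : A ∈ t
  · rw [if_pos h]; exact hs A hA
  · rw [if_neg h]; exact h_compl _ (hs A hA)

lemma atom_subset {s t : Finset (Set I)} {A : Set I} (hA : A ∈ s) (hAt : A ∈ t) :
    atom s t ⊆ A := by
  intro i hi
  have := mem_atom_iff.mp hi A hA
  rwa [if_pos hAt] at this

lemma set_eq_biUnion_atoms {s : Finset (Set I)} {A : Set I} (hA : A ∈ s) :
    A = ⋃ t ∈ s.powerset.filter (A ∈ ·), atom s t := by
  ext i
  constructor
  · intro hi
    have hmem : tau s i ∈ s.powerset.filter (A ∈ ·) := by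
      simp only [Finset.mem_filter, Finset.mem_powerset]
      exact ⟨tau_subset s i, by simp [tau, hA, hi]⟩
    exact Set.mem_biUnion hmem (mem_atom_tau s i)
  · intro hi
    obtain ⟨t, ht, hit⟩ := Set.mem_iUnion₂.mp hi
    simp only [Finset.mem_filter, Finset.mem_powerset] at ht
    exact atom_subset hA ht.2 hit

lemma mu_eq_sum_atoms (h_univ : univ ∈ 𝒜) (h_compl : ∀ A ∈ 𝒜, Aᶜ ∈ 𝒜)
    (h_union : ∀ A ∈ 𝒜, ∀ B ∈ 𝒜, A ∪ B ∈ 𝒜)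
    (hadd : ∀ A ∈ 𝒜, ∀ B ∈ 𝒜, Disjoint A B → μ (A ∪ B) = μ A + μ B)
    {s : Finset (Set I)} (hs : ∀ A ∈ s, A ∈ 𝒜) {A : Set I} (hA : A ∈ s) :
    μ A = ∑ t ∈ s.powerset, if A ∈ t then μ (atom s t) else 0 := by
  conv_lhs => rw [set_eq_biUnion_atoms hA]
  rw [mu_biUnion h_univ h_compl h_union hadd _ _
      (fun t _ => atom_mem_alg h_univ h_compl h_union hs t)
      (fun t ht t' ht' hne => by
        simp only [Finset.mem_filter, Finset.mem_powerset] at ht ht'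
        exact atom_disjoint ht.1 ht'.1 hne)]
  rw [Finset.sum_filter]


lemma main_pos (h_univ : univ ∈ 𝒜) (h_compl : ∀ A ∈ 𝒜, Aᶜ ∈ 𝒜)
    (h_union : ∀ A ∈ 𝒜, ∀ B ∈ 𝒜, A ∪ B ∈ 𝒜)
    (hpos : ∀ A ∈ 𝒜, 0 ≤ μ A)
    (hadd : ∀ A ∈ 𝒜, ∀ B ∈ 𝒜, Disjoint A B → μ (A ∪ B) = μ A + μ B)
    (X : Set I) (r : ℝ)
    (hsup : ∀ A ∈ 𝒜, A ⊆ X → μ A ≤ r) (hinf : ∀ A ∈ 𝒜, X ⊆ A → r ≤ μ A)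
    (s : Finset (Set I)) (hs : ∀ A ∈ s, A ∈ 𝒜) (c : Set I → ℝ) (d : ℝ)
    (hpt : ∀ i, 0 ≤ (∑ A ∈ s, c A * ind A i) + d * ind X i) :
    0 ≤ (∑ A ∈ s, c A * μ A) + d * r := by
  set P := s.powerset with hP
  set d' : Finset (Set I) → ℝ := fun t => ∑ A ∈ t, c A with hd'
  have hrw : ∑ A ∈ s, c A * μ A = ∑ t ∈ P, d' t * μ (atom s t) := by
    calc ∑ A ∈ s, c A * μ A
        = ∑ A ∈ s, ∑ t ∈ P, (if A ∈ t then c A * μ (atom s t) else 0) := by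
          refine Finset.sum_congr rfl fun A hA => ?_
          rw [mu_eq_sum_atoms h_univ h_compl h_union hadd hs hA, Finset.mul_sum]
          exact Finset.sum_congr rfl fun t _ => by rw [mul_ite, mul_zero]
      _ = ∑ t ∈ P, ∑ A ∈ s, (if A ∈ t then c A * μ (atom s t) else 0) := Finset.sum_comm
      _ = ∑ t ∈ P, d' t * μ (atom s t) := by
          refine Finset.sum_congr rfl fun t ht => ?_
          rw [← Finset.sum_filter, ← Finset.sum_mul, Finset.filter_mem_eq_inter,
            Finset.inter_eq_right.mpr (Finset.mem_powerset.mp ht)]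
  have hpt' : ∀ i, 0 ≤ d' (tau s i) + d * ind X i := by
    intro i
    have h1 : d' (tau s i) = ∑ A ∈ s, c A * ind A i := by
      show ∑ A ∈ s.filter (fun A => i ∈ A), c A = _
      rw [Finset.sum_filter]
      refine Finset.sum_congr rfl fun A _ => ?_
      by_cases h : i ∈ A
      · rw [if_pos h, ind_of_mem h, mul_one]
      · rw [if_neg h, ind_of_not_mem h, mul_zero]
    have h2 := hpt i
    rw [← h1] at h2
    exact h2
  have fact1 : ∀ t ∈ P, ∀ i ∈ atom s t, i ∉ X → 0 ≤ d' t := by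
    intro t ht i hi hiX
    have h := hpt' i
    rw [← eq_tau_of_mem_atom (Finset.mem_powerset.mp ht) hi, ind_of_not_mem hiX,
      mul_zero, add_zero] at h
    exact h
  have fact2 : ∀ t ∈ P, ∀ i ∈ atom s t, i ∈ X → 0 ≤ d' t + d := by
    intro t ht i hi hiX
    have h := hpt' i
    rw [← eq_tau_of_mem_atom (Finset.mem_powerset.mp ht) hi, ind_of_mem hiX, mul_one] at h
    exact h
  have hEmem : ∀ t, atom s t ∈ 𝒜 := atom_mem_alg h_univ h_compl h_union hs
  have hEpos : ∀ t, 0 ≤ μ (atom s t) := fun t => hpos _ (hEmem t)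
  have hEempty : ∀ t, atom s t = ∅ → μ (atom s t) = 0 := fun t h => by
    rw [h]; exact mu_empty h_univ h_compl hadd
  rcases le_or_gt 0 d with hd | hd
  · set S := P.filter (fun t => (atom s t).Nonempty ∧ d' t < 0) with hS
    have hSsub : S ⊆ P := Finset.filter_subset _ _
    have hsubX : ∀ t ∈ S, atom s t ⊆ X := by
      intro t htS i hi
      by_contra hiX
      obtain ⟨-, h2⟩ := (Finset.mem_filter.mp htS).2
      exact absurd (fact1 t (hSsub htS) i hi hiX) (not_le.mpr h2)
    have hge : ∀ t ∈ S, -d ≤ d' t := by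
      intro t htS
      obtain ⟨⟨i, hi⟩, -⟩ := (Finset.mem_filter.mp htS).2
      have := fact2 t (hSsub htS) i hi (hsubX t htS hi)
      linarith
    have hA0mem : (⋃ t ∈ S, atom s t) ∈ 𝒜 :=
      alg_biUnion h_univ h_compl h_union _ _ (fun t _ => hEmem t)
    have hA0X : (⋃ t ∈ S, atom s t) ⊆ X := Set.iUnion₂_subset hsubX
    have hA0mu : μ (⋃ t ∈ S, atom s t) = ∑ t ∈ S, μ (atom s t) :=
      mu_biUnion h_univ h_compl h_union hadd _ _ (fun t _ => hEmem t)
        (fun t ht t' ht' hne => atom_disjoint (Finset.mem_powerset.mp (hSsub ht))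
          (Finset.mem_powerset.mp (hSsub ht')) hne)
    have hA0r : μ (⋃ t ∈ S, atom s t) ≤ r := hsup _ hA0mem hA0X
    have h1 : ∑ t ∈ S, d' t * μ (atom s t) ≤ ∑ t ∈ P, d' t * μ (atom s t) := by
      apply Finset.sum_le_sum_of_subset_of_nonneg hSsub
      intro t htP htS
      rcases Set.eq_empty_or_nonempty (atom s t) with h | h
      · rw [hEempty t h, mul_zero]
      · have hnlt : ¬ d' t < 0 := fun hlt => htS (Finset.mem_filter.mpr ⟨htP, h, hlt⟩)
        exact mul_nonneg (not_lt.mp hnlt) (hEpos t)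
    have h2 : ∑ t ∈ S, (-d) * μ (atom s t) ≤ ∑ t ∈ S, d' t * μ (atom s t) :=
      Finset.sum_le_sum fun t ht => mul_le_mul_of_nonneg_right (hge t ht) (hEpos t)
    have h3 : ∑ t ∈ S, (-d) * μ (atom s t) = (-d) * μ (⋃ t ∈ S, atom s t) := by
      rw [hA0mu, Finset.mul_sum]
    have h4 : (-d) * r ≤ (-d) * μ (⋃ t ∈ S, atom s t) := by nlinarith
    rw [hrw]; nlinarith
  · set S := P.filter (fun t => (atom s t ∩ X).Nonempty) with hS
    have hSsub : S ⊆ P := Finset.filter_subset _ _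
    have hA1mem : (⋃ t ∈ S, atom s t) ∈ 𝒜 :=
      alg_biUnion h_univ h_compl h_union _ _ (fun t _ => hEmem t)
    have hXA1 : X ⊆ ⋃ t ∈ S, atom s t := by
      intro i hiX
      have hmem : tau s i ∈ S := Finset.mem_filter.mpr
        ⟨Finset.mem_powerset.mpr (tau_subset s i), ⟨i, mem_atom_tau s i, hiX⟩⟩
      exact Set.mem_biUnion hmem (mem_atom_tau s i)
    have hA1mu : μ (⋃ t ∈ S, atom s t) = ∑ t ∈ S, μ (atom s t) :=
      mu_biUnion h_univ h_compl h_union hadd _ _ (fun t _ => hEmem t)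
        (fun t ht t' ht' hne => atom_disjoint (Finset.mem_powerset.mp (hSsub ht))
          (Finset.mem_powerset.mp (hSsub ht')) hne)
    have hA1r : r ≤ μ (⋃ t ∈ S, atom s t) := hinf _ hA1mem hXA1
    have hge : ∀ t ∈ S, -d ≤ d' t := by
      intro t htS
      obtain ⟨i, hi, hiX⟩ := (Finset.mem_filter.mp htS).2
      have := fact2 t (hSsub htS) i hi hiX
      linarith
    have h1 : ∑ t ∈ S, d' t * μ (atom s t) ≤ ∑ t ∈ P, d' t * μ (atom s t) := by
      apply Finset.sum_le_sum_of_subset_of_nonneg hSsub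
      intro t htP htS
      rcases Set.eq_empty_or_nonempty (atom s t) with h | h
      · rw [hEempty t h, mul_zero]
      · obtain ⟨i, hi⟩ := h
        have hiX : i ∉ X := fun hiX => htS (Finset.mem_filter.mpr ⟨htP, ⟨i, hi, hiX⟩⟩)
        exact mul_nonneg (fact1 t htP i hi hiX) (hEpos t)
    have h2 : ∑ t ∈ S, (-d) * μ (atom s t) ≤ ∑ t ∈ S, d' t * μ (atom s t) :=
      Finset.sum_le_sum fun t ht => mul_le_mul_of_nonneg_right (hge t ht) (hEpos t)
    have h3 : ∑ t ∈ S, (-d) * μ (atom s t) = (-d) * μ (⋃ t ∈ S, atom s t) := by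
      rw [hA1mu, Finset.mul_sum]
    rw [hrw]; nlinarith


noncomputable def bdd (I : Type*) : Submodule ℝ (I → ℝ) where
  carrier := {f | ∃ C : ℝ, ∀ i, |f i| ≤ C}
  add_mem' := by
    rintro f g ⟨C, hC⟩ ⟨D, hD⟩
    exact ⟨C + D, fun i => (abs_add_le _ _).trans (add_le_add (hC i) (hD i))⟩
  zero_mem' := ⟨0, fun i => by simp⟩
  smul_mem' := by
    rintro a f ⟨C, hC⟩
    refine ⟨|a| * C, fun i => ?_⟩
    rw [Pi.smul_apply, smul_eq_mul, abs_mul]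
    exact mul_le_mul_of_nonneg_left (hC i) (abs_nonneg a)

noncomputable def indV (S : Set I) : bdd I := ⟨ind S, ⟨1, abs_ind_le_one S⟩⟩

noncomputable def Nfun {I : Type*} (f : bdd I) : ℝ := ⨆ i, (f : I → ℝ) i

lemma bddAbove_range (f : bdd I) : BddAbove (Set.range fun i => (f : I → ℝ) i) := by
  obtain ⟨C, hC⟩ := f.2
  exact ⟨C, by rintro x ⟨j, rfl⟩; exact (abs_le.mp (hC j)).2⟩

lemma le_Nfun [Nonempty I] (f : bdd I) (i : I) : (f : I → ℝ) i ≤ Nfun f :=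
  le_ciSup (bddAbove_range f) i

lemma Nfun_le [Nonempty I] (f : bdd I) (a : ℝ) (h : ∀ i, (f : I → ℝ) i ≤ a) : Nfun f ≤ a :=
  ciSup_le h

lemma Nfun_add [Nonempty I] (f g : bdd I) : Nfun (f + g) ≤ Nfun f + Nfun g := by
  refine Nfun_le _ _ fun i => ?_
  exact add_le_add (le_Nfun f i) (le_Nfun g i)

lemma Nfun_smul [Nonempty I] (c : ℝ) (hc : 0 < c) (f : bdd I) : Nfun (c • f) = c * Nfun f := by
  have h : Nfun (c • f) = ⨆ i, c • ((f : I → ℝ) i) := rfl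
  rw [h, ← Real.smul_iSup_of_nonneg hc.le, smul_eq_mul]
  rfl

lemma key_pos (h_univ : univ ∈ 𝒜) (h_compl : ∀ A ∈ 𝒜, Aᶜ ∈ 𝒜)
    (h_union : ∀ A ∈ 𝒜, ∀ B ∈ 𝒜, A ∪ B ∈ 𝒜)
    (hpos : ∀ A ∈ 𝒜, 0 ≤ μ A)
    (hadd : ∀ A ∈ 𝒜, ∀ B ∈ 𝒜, Disjoint A B → μ (A ∪ B) = μ A + μ B)
    {X : Set I} {r : ℝ}
    (hsup : ∀ A ∈ 𝒜, A ⊆ X → μ A ≤ r) (hinf : ∀ A ∈ 𝒜, X ⊆ A → r ≤ μ A)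
    (w : Set I →₀ ℝ) (hw : ↑w.support ⊆ 𝒜 ∪ {X})
    (hpt : ∀ i, 0 ≤ ((Finsupp.linearCombination ℝ (indV : Set I → bdd I)) w : I → ℝ) i) :
    0 ≤ Finsupp.linearCombination ℝ (fun S => if S ∈ 𝒜 then μ S else r) w := by
  set s := w.support.filter (· ∈ 𝒜) with hs_def
  set s' := w.support.filter (· ∉ 𝒜) with hs'_def
  have hX' : ∀ A ∈ s', A = X := by
    intro A hA
    have h1 := Finset.mem_filter.mp hA
    rcases hw h1.1 with h | h
    · exact absurd h h1.2
    · exact h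
  set d : ℝ := ∑ A ∈ s', w A with hd
  have hTw : ∀ i, ((Finsupp.linearCombination ℝ (indV : Set I → bdd I)) w : I → ℝ) i
      = (∑ A ∈ s, w A * ind A i) + d * ind X i := by
    intro i
    have h0 : ((Finsupp.linearCombination ℝ (indV : Set I → bdd I)) w : I → ℝ) i
        = ∑ A ∈ w.support, w A * ind A i := by
      rw [Finsupp.linearCombination_apply, Finsupp.sum, AddSubmonoidClass.coe_finset_sum,
        Finset.sum_apply]
      rfl
    rw [h0, ← Finset.sum_filter_add_sum_filter_not w.support (· ∈ 𝒜)]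
    congr 1
    rw [hd, Finset.sum_mul]
    exact Finset.sum_congr rfl fun A hA => by rw [hX' A hA]
  have hval : Finsupp.linearCombination ℝ (fun S => if S ∈ 𝒜 then μ S else r) w
      = (∑ A ∈ s, w A * μ A) + d * r := by
    rw [Finsupp.linearCombination_apply, Finsupp.sum,
      ← Finset.sum_filter_add_sum_filter_not w.support (· ∈ 𝒜)]
    congr 1
    · refine Finset.sum_congr rfl fun A hA => ?_
      rw [smul_eq_mul, if_pos (Finset.mem_filter.mp hA).2]
    · rw [hd, Finset.sum_mul]
      refine Finset.sum_congr rfl fun A hA => ?_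
      rw [smul_eq_mul, if_neg (Finset.mem_filter.mp hA).2]
  rw [hval]
  exact main_pos h_univ h_compl h_union hpos hadd X r hsup hinf s
    (fun A hA => (Finset.mem_filter.mp hA).2) (fun A => w A) d
    (fun i => by rw [← hTw i]; exact hpt i)

end ChargeExt

open ChargeExt

/-- A finitely additive probability charge on a Boolean subalgebra
`𝒜` of `P(I)` extends to an ultracharge on all of `P(I)` taking any prescribed
value `r` on a set `X`, provided `r` lies between the inner and outer values. -/
theorem charge_extension {I : Type*} (𝒜 : Set (Set I)) (μ : Set I → ℝ)
    (halg_univ : Set.univ ∈ 𝒜)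
    (halg_compl : ∀ A ∈ 𝒜, Aᶜ ∈ 𝒜)
    (halg_union : ∀ A ∈ 𝒜, ∀ B ∈ 𝒜, A ∪ B ∈ 𝒜)
    (hpos : ∀ A ∈ 𝒜, 0 ≤ μ A)
    (hone : μ Set.univ = 1)
    (hadd : ∀ A ∈ 𝒜, ∀ B ∈ 𝒜, Disjoint A B → μ (A ∪ B) = μ A + μ B)
    (X : Set I) (r : ℝ)
    (hsup : ∀ A ∈ 𝒜, A ⊆ X → μ A ≤ r)
    (hinf : ∀ A ∈ 𝒜, X ⊆ A → r ≤ μ A) :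
    ∃ ν : Set I → ℝ, (∀ A, 0 ≤ ν A) ∧ ν Set.univ = 1 ∧
      (∀ A B : Set I, Disjoint A B → ν (A ∪ B) = ν A + ν B) ∧
      (∀ A ∈ 𝒜, ν A = μ A) ∧ ν X = r := by
  classical
  rcases isEmpty_or_nonempty I with hI | hI
  · exfalso
    have h1 : (Set.univ : Set I) = ∅ := Set.univ_eq_empty_iff.mpr hI
    have h2 := mu_empty halg_univ halg_compl hadd
    rw [h1] at hone
    linarith
  · set μ'' : Set I → ℝ := fun S => if S ∈ 𝒜 then μ S else r with hμ''
    set Φ := Finsupp.linearCombination ℝ μ'' with hΦ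
    set T := Finsupp.linearCombination ℝ (indV : Set I → bdd I) with hT
    set W := Finsupp.supported ℝ ℝ (𝒜 ∪ {X}) with hW
    have key : ∀ w ∈ W, (∀ i, 0 ≤ (T w : I → ℝ) i) → 0 ≤ Φ w := fun w hw hpt =>
      key_pos halg_univ halg_compl halg_union hpos hadd hsup hinf w
        ((Finsupp.mem_supported _ _).mp hw) hpt
    have hwd : ∀ w₁ ∈ W, ∀ w₂ ∈ W, T w₁ = T w₂ → Φ w₁ = Φ w₂ := by
      intro w₁ h₁ w₂ h₂ hEq
      have hz : T (w₁ - w₂) = 0 := by rw [map_sub, hEq, sub_self]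
      have hz' : T (w₂ - w₁) = 0 := by rw [map_sub, hEq, sub_self]
      have ha := key (w₁ - w₂) (sub_mem h₁ h₂) (fun i => by rw [hz]; simp)
      have hb := key (w₂ - w₁) (sub_mem h₂ h₁) (fun i => by rw [hz']; simp)
      rw [map_sub] at ha hb
      linarith
    set D := Submodule.map T W with hD
    have pick : ∀ x : D, ∃ w, w ∈ W ∧ T w = ↑x := fun x => Submodule.mem_map.mp x.2
    choose p hpW hpT using pick
    let f₀ : D →ₗ[ℝ] ℝ :=
      { toFun := fun x => Φ (p x)
        map_add' := by
          intro x y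
          show Φ (p (x + y)) = Φ (p x) + Φ (p y)
          have h1 : Φ (p (x + y)) = Φ (p x + p y) :=
            hwd _ (hpW (x + y)) _ (add_mem (hpW x) (hpW y))
              (by rw [hpT, map_add, hpT, hpT]; rfl)
          rw [h1, map_add]
        map_smul' := by
          intro c x
          show Φ (p (c • x)) = (RingHom.id ℝ) c • Φ (p x)
          have h1 : Φ (p (c • x)) = Φ (c • p x) :=
            hwd _ (hpW (c • x)) _ (Submodule.smul_mem _ c (hpW x))
              (by rw [hpT, map_smul, hpT]; rfl)
          rw [h1, map_smul]
          rfl }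
    have huniv : μ'' Set.univ = 1 := by
      show (if Set.univ ∈ 𝒜 then μ Set.univ else r) = 1
      rw [if_pos halg_univ]; exact hone
    have hf : ∀ x : D, f₀ x ≤ Nfun (x : bdd I) := by
      intro x
      set m := Nfun (x : bdd I) with hm
      have hw' : Finsupp.single (Set.univ : Set I) m - p x ∈ W :=
        sub_mem (Finsupp.single_mem_supported ℝ m (Set.mem_union_left _ halg_univ)) (hpW x)
      have hTv : T (Finsupp.single (Set.univ : Set I) m - p x) = m • indV Set.univ - (x : bdd I) := by
        rw [map_sub, hT, Finsupp.linearCombination_single, hpT]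
      have hkey := key _ hw' (fun i => by
        rw [hTv]
        have hc : (((m • indV Set.univ - (x : bdd I) : bdd I)) : I → ℝ) i
            = m * ind Set.univ i - ((x : bdd I) : I → ℝ) i := by
          rw [AddSubgroupClass.coe_sub, Pi.sub_apply, SetLike.val_smul, Pi.smul_apply,
            smul_eq_mul]
          rfl
        rw [hc, ind_of_mem (Set.mem_univ i), mul_one]
        have := le_Nfun (x : bdd I) i
        linarith)
      have hΦv : Φ (Finsupp.single (Set.univ : Set I) m - p x) = m * μ'' Set.univ - Φ (p x) := by
        rw [map_sub, hΦ, Finsupp.linearCombination_single, smul_eq_mul]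
      rw [hΦv, huniv, mul_one] at hkey
      have : f₀ x = Φ (p x) := rfl
      linarith [hkey, this.ge]
    obtain ⟨g, hg_ext, hg_le⟩ := exists_extension_of_le_sublinear ⟨D, f₀⟩ Nfun
      (fun c hc x => Nfun_smul c hc x) Nfun_add hf
    have hval : ∀ (S : Set I) (w : Set I →₀ ℝ), w ∈ W → T w = indV S → g (indV S) = Φ w := by
      intro S w hw hTw
      have hmem : indV S ∈ D := ⟨w, hw, hTw⟩
      have h1 := hg_ext ⟨indV S, hmem⟩
      have h2 : f₀ (⟨indV S, hmem⟩ : D) = Φ (p ⟨indV S, hmem⟩) := rfl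
      rw [h1]
      show Φ (p ⟨indV S, hmem⟩) = Φ w
      exact hwd _ (hpW _) _ hw (by rw [hpT]; exact hTw.symm)
    have hext : ∀ S : Set I, S ∈ 𝒜 ∪ {X} → g (indV S) = μ'' S := by
      intro S hS
      have h1 := hval S (Finsupp.single S 1) (Finsupp.single_mem_supported ℝ 1 hS)
        (by rw [hT, Finsupp.linearCombination_single, one_smul])
      rw [h1, hΦ, Finsupp.linearCombination_single, one_smul]
    have hμX : μ'' X = r := by
      show (if X ∈ 𝒜 then μ X else r) = r
      by_cases hX : X ∈ 𝒜
      · rw [if_pos hX]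
        exact le_antisymm (hsup X hX subset_rfl) (hinf X hX subset_rfl)
      · rw [if_neg hX]
    refine ⟨fun S => g (indV S), ?_, ?_, ?_, ?_, ?_⟩
    · intro S
      have h1 := hg_le (-(indV S))
      rw [map_neg] at h1
      have h2 : Nfun (-(indV S)) ≤ 0 := Nfun_le _ 0 fun i => by
        have hc : ((-(indV S) : bdd I) : I → ℝ) i = -(ind S i) := rfl
        rw [hc]
        simpa using ind_nonneg S i
      linarith
    · show g (indV Set.univ) = 1
      rw [hext Set.univ (Set.mem_union_left _ halg_univ), huniv]
    · intro A B hAB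
      have hindd : indV (A ∪ B) = indV A + indV B := by
        apply Subtype.ext
        funext i
        have hc : ((indV A + indV B : bdd I) : I → ℝ) i = ind A i + ind B i := rfl
        show ind (A ∪ B) i = _
        rw [hc]
        by_cases hA : i ∈ A
        · have hB : i ∉ B := fun hB => Set.disjoint_left.mp hAB hA hB
          rw [ind_of_mem (Set.mem_union_left _ hA), ind_of_mem hA, ind_of_not_mem hB]
          ring
        · by_cases hB : i ∈ B
          · rw [ind_of_mem (Set.mem_union_right _ hB), ind_of_not_mem hA, ind_of_mem hB]
            ring
          · rw [ind_of_not_mem (fun h => h.elim hA hB), ind_of_not_mem hA, ind_of_not_mem hB]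
            ring
      show g (indV (A ∪ B)) = g (indV A) + g (indV B)
      rw [hindd, map_add]
    · intro A hA
      show g (indV A) = μ A
      rw [hext A (Set.mem_union_left _ hA)]
      show (if A ∈ 𝒜 then μ A else r) = μ A
      rw [if_pos hA]
    · show g (indV X) = r
      rw [hext X (Set.mem_union_right _ rfl), hμX]
end

section
/- A finitely additive probability charge on the power set of a set X is an extreme point of the convex set of all such charges if and only if it takes only the values 0 and 1 (i.e., corresponds to an ultrafilter). -/
/-- A finitely additive probability measure defined on all subsets of a set. -/
def IsUltracharge {X : Type*} (μ : Set X → ℝ) : Prop :=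
  (∀ A : Set X, 0 ≤ μ A) ∧ μ Set.univ = 1 ∧
    ∀ A B : Set X, Disjoint A B → μ (A ∪ B) = μ A + μ B

lemma ultracharge_compl {X : Type*} {μ : Set X → ℝ} (h : IsUltracharge μ)
    (A : Set X) : μ Aᶜ = 1 - μ A := by
  obtain ⟨_, huniv, hadd⟩ := h
  have := hadd A Aᶜ disjoint_compl_right
  rw [Set.union_compl_self, huniv] at this
  linarith

/-- An ultracharge is an extreme point of the convex set of all
ultracharges on `X` if and only if it is two-valued (takes only values 0 and 1,
i.e. corresponds to an ultrafilter). -/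
theorem ultracharge_extreme_iff_twoValued {X : Type*} (μ : Set X → ℝ)
    (hμ : IsUltracharge μ) :
    (∀ (ε : ℝ), 0 < ε → ε < 1 → ∀ μ₁ μ₂ : Set X → ℝ,
        IsUltracharge μ₁ → IsUltracharge μ₂ →
        (∀ A : Set X, μ A = ε * μ₁ A + (1 - ε) * μ₂ A) → μ₁ = μ ∧ μ₂ = μ) ↔
      (∀ A : Set X, μ A = 0 ∨ μ A = 1) := by
  obtain ⟨hpos, huniv, hadd⟩ := hμ
  have hμ' : IsUltracharge μ := ⟨hpos, huniv, hadd⟩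
  have hcompl := ultracharge_compl hμ'
  constructor
  · intro hext A
    by_contra h
    push_neg at h
    obtain ⟨h0, h1⟩ := h
    have hA0 : 0 < μ A := lt_of_le_of_ne (hpos A) (Ne.symm h0)
    have hA1 : μ A < 1 := by
      have h' := hpos Aᶜ
      have := hcompl A
      rcases lt_or_eq_of_le (show μ A ≤ 1 by linarith) with h | h
      · exact h
      · exact absurd h h1
    have hAc : 0 < μ Aᶜ := by rw [hcompl]; linarith
    set μ₁ : Set X → ℝ := fun B => μ (B ∩ A) / μ A with hμ₁def
    set μ₂ : Set X → ℝ := fun B => μ (B ∩ Aᶜ) / μ Aᶜ with hμ₂def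
    have hU1 : IsUltracharge μ₁ := by
      refine ⟨fun B => div_nonneg (hpos _) hA0.le, ?_, ?_⟩
      · simp [hμ₁def, Set.univ_inter, div_self hA0.ne']
      · intro C D hCD
        have hd : Disjoint (C ∩ A) (D ∩ A) :=
          hCD.mono Set.inter_subset_left Set.inter_subset_left
        simp only [hμ₁def, Set.union_inter_distrib_right, hadd _ _ hd, add_div]
    have hU2 : IsUltracharge μ₂ := by
      refine ⟨fun B => div_nonneg (hpos _) hAc.le, ?_, ?_⟩
      · simp [hμ₂def, Set.univ_inter, div_self hAc.ne']
      · intro C D hCD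
        have hd : Disjoint (C ∩ Aᶜ) (D ∩ Aᶜ) :=
          hCD.mono Set.inter_subset_left Set.inter_subset_left
        simp only [hμ₂def, Set.union_inter_distrib_right, hadd _ _ hd, add_div]
    have hsum : ∀ B : Set X, μ B = μ A * μ₁ B + (1 - μ A) * μ₂ B := by
      intro B
      have hd : Disjoint (B ∩ A) (B ∩ Aᶜ) :=
        disjoint_compl_right.mono Set.inter_subset_right Set.inter_subset_right
      have hB : μ (B ∩ A) + μ (B ∩ Aᶜ) = μ B := by
        rw [← hadd _ _ hd, Set.inter_union_compl]
      have e1 : μ A * μ₁ B = μ (B ∩ A) := by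
        rw [hμ₁def]; field_simp
      have e2 : (1 - μ A) * μ₂ B = μ (B ∩ Aᶜ) := by
        rw [hμ₂def]
        have : (1 - μ A) = μ Aᶜ := by rw [hcompl A]
        rw [this]; field_simp
      rw [e1, e2, hB]
    obtain ⟨h1', _⟩ := hext (μ A) hA0 hA1 μ₁ μ₂ hU1 hU2 hsum
    have hμ₁A : μ₁ A = 1 := by
      simp [hμ₁def, Set.inter_self, div_self hA0.ne']
    rw [h1'] at hμ₁A
    exact h1 hμ₁A
  · intro h2 ε hε0 hε1 μ₁ μ₂ hμ1 hμ2 hcomb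
    have key0 : ∀ A : Set X, μ A = 0 → μ₁ A = 0 ∧ μ₂ A = 0 := by
      intro A hA
      have hc := hcomb A
      have ha := hμ1.1 A
      have hb := hμ2.1 A
      constructor <;> nlinarith
    have key : ∀ A : Set X, μ₁ A = μ A ∧ μ₂ A = μ A := by
      intro A
      rcases h2 A with h | h
      · rw [h]; exact key0 A h
      · have hc : μ Aᶜ = 0 := by rw [hcompl A, h]; ring
        obtain ⟨k1, k2⟩ := key0 Aᶜ hc
        have c1 := ultracharge_compl hμ1 A
        have c2 := ultracharge_compl hμ2 A
        rw [h]
        constructor <;> linarith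
    constructor <;> funext A
    · exact (key A).1
    · exact (key A).2
end

section
/- (Jensen-type estimate for ultramean relations) If R : M → ℝ is λ-continuous for a concave increasing modulus λ and μ is a finitely additive probability measure on P(I), then defining R̄([a]) = ∫ R(aᵢ) dμ on the ultramean metric quotient with metric d([a],[b]) = ∫ d(aᵢ,bᵢ) dμ, one has R̄([a]) - R̄([b]) ≤ λ(d([a],[b])), i.e., R̄ is λ-continuous. -/
open MeasureTheory

/-- Integral of a (bounded) real function with respect to a finitely additive
set function, defined via the layer-cake formula. -/
noncomputable def cInt {α : Type*} (μ : Set α → ℝ) (f : α → ℝ) : ℝ :=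
  (∫ t in Set.Ioi (0 : ℝ), μ {a | t ≤ f a}) - ∫ t in Set.Ioi (0 : ℝ), μ {a | f a ≤ -t}

open Set

namespace UCAux

variable {α : Type*} {μ : Set α → ℝ}

lemma uc_empty (hμ : IsUltracharge μ) : μ ∅ = 0 := by
  have h := hμ.2.2 ∅ ∅ (by simp)
  simp only [Set.union_self] at h
  linarith

lemma uc_mono (hμ : IsUltracharge μ) {A B : Set α} (h : A ⊆ B) : μ A ≤ μ B := by
  have hd := hμ.2.2 A (B \ A) disjoint_sdiff_self_right
  rw [Set.union_diff_cancel h] at hd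
  have := hμ.1 (B \ A)
  linarith

lemma uc_le_one (hμ : IsUltracharge μ) (A : Set α) : μ A ≤ 1 :=
  hμ.2.1 ▸ uc_mono hμ (subset_univ A)

lemma uc_norm (hμ : IsUltracharge μ) (A : Set α) : ‖μ A‖ ≤ 1 := by
  rw [Real.norm_eq_abs, abs_le]
  exact ⟨by linarith [hμ.1 A], uc_le_one hμ A⟩

lemma uc_compl (hμ : IsUltracharge μ) (A : Set α) : μ Aᶜ = 1 - μ A := by
  have h := hμ.2.2 A Aᶜ disjoint_compl_right
  rw [union_compl_self, hμ.2.1] at h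
  linarith

lemma uc_sum (hμ : IsUltracharge μ) {β : Type*} (s : Finset β) (A : β → Set α)
    (hd : ∀ x ∈ s, ∀ y ∈ s, x ≠ y → Disjoint (A x) (A y)) :
    μ (⋃ x ∈ s, A x) = ∑ x ∈ s, μ (A x) := by
  classical
  induction s using Finset.cons_induction with
  | empty => simpa using uc_empty hμ
  | cons a s ha ih =>
    simp only [Finset.cons_eq_insert] at hd ⊢
    rw [Finset.sum_insert ha, Finset.set_biUnion_insert]
    rw [hμ.2.2]
    · rw [ih (fun x hx y hy hxy => hd x (Finset.mem_insert_of_mem hx) y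
        (Finset.mem_insert_of_mem hy) hxy)]
    · rw [Set.disjoint_iUnion_right]
      intro i
      rw [Set.disjoint_iUnion_right]
      intro hi
      exact hd a (Finset.mem_insert_self a s) i (Finset.mem_insert_of_mem hi)
        (fun h => ha (h ▸ hi))

/-- positive layer-cake integral -/
noncomputable def posL (μ : Set α → ℝ) (f : α → ℝ) : ℝ :=
  ∫ t in Set.Ioi (0 : ℝ), μ {a | t ≤ f a}

lemma surv_antitone (hμ : IsUltracharge μ) (f : α → ℝ) :
    Antitone (fun t => μ {a | t ≤ f a}) := by
  intro s t hst
  exact uc_mono hμ (fun a (ha : t ≤ f a) => hst.trans ha)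

lemma strict_antitone (hμ : IsUltracharge μ) (f : α → ℝ) :
    Antitone (fun t => μ {a | t < f a}) := by
  intro s t hst
  exact uc_mono hμ (fun a (ha : t < f a) => lt_of_le_of_lt hst ha)

lemma sub_antitone (hμ : IsUltracharge μ) (f : α → ℝ) :
    Monotone (fun t => μ {a | f a ≤ t}) := by
  intro s t hst
  exact uc_mono hμ (fun a (ha : f a ≤ s) => ha.trans hst)

lemma integrableOn_Ioi_of_bdd {F : ℝ → ℝ} (hm : Measurable F) (hb : ∀ t, ‖F t‖ ≤ 1)
    {C : ℝ} (h0 : ∀ t, C < t → F t = 0) (A : ℝ) : IntegrableOn F (Ioi A) := by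
  have h1 : IntegrableOn F (Ioc A (max A C)) :=
    Measure.integrableOn_of_bounded (by simp [measure_Ioc_lt_top.ne])
      hm.aestronglyMeasurable (ae_of_all _ hb)
  have h2 : IntegrableOn F (Ioi (max A C)) := by
    have he : EqOn F (fun _ => (0:ℝ)) (Ioi (max A C)) :=
      fun t ht => h0 t (lt_of_le_of_lt (le_max_right A C) ht)
    rw [integrableOn_congr_fun he measurableSet_Ioi]
    exact integrableOn_zero
  have := h1.union h2
  rwa [Ioc_union_Ioi_eq_Ioi (le_max_left A C)] at this

lemma surv_vanish (hμ : IsUltracharge μ) {f : α → ℝ} {C : ℝ} (hfC : ∀ i, f i ≤ C)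
    {t : ℝ} (ht : C < t) : μ {a | t ≤ f a} = 0 := by
  have : {a | t ≤ f a} = ∅ := by
    ext a
    simp only [mem_setOf_eq, mem_empty_iff_false, iff_false, not_le]
    exact lt_of_le_of_lt (hfC a) ht
  rw [this, uc_empty hμ]

lemma int_surv (hμ : IsUltracharge μ) {f : α → ℝ} {C : ℝ} (hfC : ∀ i, f i ≤ C) (A : ℝ) :
    IntegrableOn (fun t => μ {a | t ≤ f a}) (Ioi A) :=
  integrableOn_Ioi_of_bdd (surv_antitone hμ f).measurable (fun t => uc_norm hμ _)
    (fun t ht => surv_vanish hμ hfC ht) A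

lemma posL_nonneg (hμ : IsUltracharge μ) (f : α → ℝ) : 0 ≤ posL μ f :=
  setIntegral_nonneg measurableSet_Ioi (fun t _ => hμ.1 _)

lemma posL_mono (hμ : IsUltracharge μ) {f g : α → ℝ} (h : ∀ i, f i ≤ g i) {C : ℝ}
    (hgC : ∀ i, g i ≤ C) : posL μ f ≤ posL μ g :=
  setIntegral_mono_on (int_surv hμ (fun i => (h i).trans (hgC i)) 0) (int_surv hμ hgC 0)
    measurableSet_Ioi (fun t _ => uc_mono hμ (fun a (ha : t ≤ f a) => ha.trans (h a)))


lemma le_add_eps {a b : ℝ} (h : ∀ ε : ℝ, 0 < ε → a ≤ b + ε) : a ≤ b := by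
  by_contra hc
  push_neg at hc
  have := h ((a - b)/2) (by linarith)
  linarith

lemma integral_Ioi_shift (F : ℝ → ℝ) (c A : ℝ) :
    ∫ t in Ioi A, F (t - c) = ∫ t in Ioi (A - c), F t := by
  rw [← integral_indicator measurableSet_Ioi, ← integral_indicator measurableSet_Ioi]
  have h : (Ioi A).indicator (fun t => F (t - c)) =
      fun t => (Ioi (A - c)).indicator F (t - c) := by
    ext t
    simp only [indicator, mem_Ioi, sub_lt_sub_iff_right]
  rw [h]
  simp only [sub_eq_add_neg]
  exact integral_add_right_eq_self _ (-c)

lemma integral_Ioi_negshift (F : ℝ → ℝ) (c : ℝ) :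
    ∫ t in Ioi (0:ℝ), F (-t - c) = ∫ t in Iio (-c), F t := by
  rw [← integral_indicator measurableSet_Ioi, ← integral_indicator measurableSet_Iio]
  have h : (Ioi (0:ℝ)).indicator (fun t => F (-t - c)) =
      fun t => (Iio (-c)).indicator F (-t - c) := by
    ext t
    by_cases ht : 0 < t
    · rw [indicator_of_mem (mem_Ioi.2 ht), indicator_of_mem (by rw [mem_Iio]; linarith)]
    · rw [indicator_of_notMem (by simpa using ht),
        indicator_of_notMem (by rw [mem_Iio]; push_neg at ht ⊢; linarith)]
  rw [h]
  have h2 : (fun t => (Iio (-c)).indicator F (-t - c)) =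
      fun t => (fun u => (Iio (-c)).indicator F (-u)) (t + c) := by
    ext t; congr 1; ring
  rw [h2, integral_add_right_eq_self (fun u => (Iio (-c)).indicator F (-u)) c]
  exact integral_neg_eq_self _ _

lemma surv_ae_strict (hμ : IsUltracharge μ) (f : α → ℝ) :
    (fun t => μ {a | t ≤ f a}) =ᵐ[volume] (fun t => μ {a | t < f a}) := by
  have hF : Antitone (fun t => μ {a | t ≤ f a}) := surv_antitone hμ f
  have hsub : {t : ℝ | (fun t => μ {a | t ≤ f a}) t ≠ (fun t => μ {a | t < f a}) t} ⊆
      {t : ℝ | ¬ContinuousAt (fun t => μ {a | t ≤ f a}) t} := by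
    intro t ht hcont
    apply ht
    have hle : μ {a | t < f a} ≤ μ {a | t ≤ f a} := uc_mono hμ (fun a (ha : t < f a) => le_of_lt ha)
    have hge : μ {a | t ≤ f a} ≤ μ {a | t < f a} := by
      have h1 : Filter.Tendsto (fun t => μ {a | t ≤ f a}) (nhdsWithin t (Ioi t))
          (nhds (μ {a | t ≤ f a})) := hcont.continuousWithinAt
      refine le_of_tendsto h1 ?_
      filter_upwards [self_mem_nhdsWithin] with s hs
      exact uc_mono hμ (fun a (ha : s ≤ f a) => lt_of_lt_of_le hs ha)
    exact le_antisymm hge hle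
  rw [Filter.EventuallyEq, ae_iff]
  exact measure_mono_null hsub (hF.countable_not_continuousAt.measure_zero _)

lemma cInt_eq_posL (hμ : IsUltracharge μ) {f : α → ℝ} (hf0 : ∀ i, 0 ≤ f i) :
    cInt μ f = posL μ f := by
  have he : EqOn (fun t => μ {a | f a ≤ -t}) (fun _ => (0:ℝ)) (Ioi 0) := by
    intro t ht
    have hs : {a | f a ≤ -t} = ∅ := by
      ext a
      simp only [mem_setOf_eq, mem_empty_iff_false, iff_false, not_le]
      have : -t < 0 := by rw [mem_Ioi] at ht; linarith
      exact lt_of_lt_of_le this (hf0 a)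
    simp only [hs, uc_empty hμ]
  unfold cInt posL
  rw [setIntegral_congr_fun measurableSet_Ioi he, integral_zero, sub_zero]

lemma cInt_add_const (hμ : IsUltracharge μ) {f : α → ℝ} (hf0 : ∀ i, 0 ≤ f i) {C : ℝ}
    (hfC : ∀ i, f i ≤ C) (k : ℝ) :
    cInt μ (fun i => f i + k) = posL μ f + k := by
  have hpos : ∫ t in Ioi (0:ℝ), μ {a | t ≤ f a + k} = ∫ t in Ioi (-k), μ {a | t ≤ f a} := by
    have hs : ∀ t : ℝ, {a | t ≤ f a + k} = {a | t - k ≤ f a} := by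
      intro t; ext a; simp only [mem_setOf_eq]; constructor <;> intro <;> linarith
    simp_rw [hs]
    have := integral_Ioi_shift (fun s => μ {a | s ≤ f a}) k 0
    rwa [zero_sub] at this
  rcases le_or_gt 0 k with hk | hk
  · -- k ≥ 0
    have hneg : ∫ t in Ioi (0:ℝ), μ {a | f a + k ≤ -t} = 0 := by
      have he : EqOn (fun t => μ {a | f a + k ≤ -t}) (fun _ => (0:ℝ)) (Ioi 0) := by
        intro t ht
        have hs : {a | f a + k ≤ -t} = ∅ := by
          ext a
          simp only [mem_setOf_eq, mem_empty_iff_false, iff_false, not_le]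
          rw [mem_Ioi] at ht
          have := hf0 a; linarith
        simp only [hs, uc_empty hμ]
      rw [setIntegral_congr_fun measurableSet_Ioi he, integral_zero]
    have hdisj : Disjoint (Ioc (-k) 0) (Ioi (0:ℝ)) := by
      rw [Set.disjoint_left]
      intro x hx hx'
      exact absurd hx' (not_lt.2 hx.2)
    have hsplit : ∫ t in Ioi (-k), μ {a | t ≤ f a} =
        (∫ t in Ioc (-k) 0, μ {a | t ≤ f a}) + ∫ t in Ioi (0:ℝ), μ {a | t ≤ f a} := by
      rw [← setIntegral_union hdisj measurableSet_Ioi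
        ((int_surv hμ hfC (-k)).mono_set Ioc_subset_Ioi_self) (int_surv hμ hfC 0),
        Ioc_union_Ioi_eq_Ioi (by linarith : -k ≤ (0:ℝ))]
    have hone : ∫ t in Ioc (-k) 0, μ {a | t ≤ f a} = k := by
      have he : EqOn (fun t => μ {a | t ≤ f a}) (fun _ => (1:ℝ)) (Ioc (-k) 0) := by
        intro t ht
        have hs : {a | t ≤ f a} = univ :=
          eq_univ_of_forall (fun a => le_trans ht.2 (hf0 a))
        simp only [hs, hμ.2.1]
      rw [setIntegral_congr_fun measurableSet_Ioc he, setIntegral_const, measureReal_def, Real.volume_Ioc,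
        smul_eq_mul, mul_one, ENNReal.toReal_ofReal (by linarith : (0:ℝ) ≤ 0 - -k)]
      ring
    unfold cInt
    rw [hneg, sub_zero, hpos, hsplit, hone]
    unfold posL
    ring
  · -- k < 0
    have hdisj : Disjoint (Ioc (0:ℝ) (-k)) (Ioi (-k)) := by
      rw [Set.disjoint_left]
      intro x hx hx'
      exact absurd hx' (not_lt.2 hx.2)
    have hsplit : posL μ f =
        (∫ t in Ioc (0:ℝ) (-k), μ {a | t ≤ f a}) + ∫ t in Ioi (-k), μ {a | t ≤ f a} := by
      unfold posL
      rw [← setIntegral_union hdisj measurableSet_Ioi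
        ((int_surv hμ hfC 0).mono_set Ioc_subset_Ioi_self) (int_surv hμ hfC (-k)),
        Ioc_union_Ioi_eq_Ioi (by linarith : (0:ℝ) ≤ -k)]
    have hneg : ∫ t in Ioi (0:ℝ), μ {a | f a + k ≤ -t} = ∫ s in Iio (-k), μ {a | f a ≤ s} := by
      have hs : ∀ t : ℝ, {a | f a + k ≤ -t} = {a | f a ≤ -t - k} := by
        intro t; ext a; simp only [mem_setOf_eq]; constructor <;> intro <;> linarith
      simp_rw [hs]
      exact integral_Ioi_negshift (fun s => μ {a | f a ≤ s}) k
    have huni : Iio (0:ℝ) ∪ Ico 0 (-k) = Iio (-k) := by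
      ext x
      simp only [mem_union, mem_Iio, mem_Ico]
      constructor
      · rintro (h | ⟨h1, h2⟩)
        · linarith
        · exact h2
      · intro h
        rcases lt_or_ge x 0 with h' | h'
        · exact Or.inl h'
        · exact Or.inr ⟨h', h⟩
    have hdisj' : Disjoint (Iio (0:ℝ)) (Ico 0 (-k)) := by
      rw [Set.disjoint_left]
      intro x hx hx'
      exact absurd hx'.1 (not_le.2 hx)
    have hzero : ∫ s in Iio (0:ℝ), μ {a | f a ≤ s} = 0 := by
      have he : EqOn (fun s => μ {a | f a ≤ s}) (fun _ => (0:ℝ)) (Iio 0) := by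
        intro s hs
        have h2 : {a | f a ≤ s} = ∅ := by
          ext a
          simp only [mem_setOf_eq, mem_empty_iff_false, iff_false, not_le]
          exact lt_of_lt_of_le hs (hf0 a)
        simp only [h2, uc_empty hμ]
      rw [setIntegral_congr_fun measurableSet_Iio he, integral_zero]
    have hintIco : IntegrableOn (fun s => μ {a | s < f a}) (Ico 0 (-k)) :=
      Measure.integrableOn_of_bounded measure_Ico_lt_top.ne
        (strict_antitone hμ f).measurable.aestronglyMeasurable
        (ae_of_all _ (fun s => uc_norm hμ _))
    have hIco : ∫ s in Ico 0 (-k), μ {a | f a ≤ s} =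
        (-k) - ∫ s in Ico 0 (-k), μ {a | s < f a} := by
      have he : EqOn (fun s => μ {a | f a ≤ s}) (fun s => 1 - μ {a | s < f a}) (Ico 0 (-k)) := by
        intro s _
        have hc : {a | f a ≤ s} = {a | s < f a}ᶜ := by
          ext a; simp only [mem_setOf_eq, mem_compl_iff, not_lt]
        simp only [hc, uc_compl hμ]
      rw [setIntegral_congr_fun measurableSet_Ico he,
        integral_sub (integrableOn_const (C := (1:ℝ)) measure_Ico_lt_top.ne) hintIco,
        setIntegral_const, measureReal_def, Real.volume_Ico, smul_eq_mul, mul_one,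
        ENNReal.toReal_ofReal (by linarith : (0:ℝ) ≤ -k - 0), sub_zero]
    have hstrict : ∫ s in Ico 0 (-k), μ {a | s < f a} =
        ∫ s in Ioc 0 (-k), μ {a | s ≤ f a} := by
      rw [integral_congr_ae (ae_restrict_of_ae (surv_ae_strict hμ f).symm)]
      exact setIntegral_congr_set Ico_ae_eq_Ioc
    have hnegsplit : ∫ s in Iio (-k), μ {a | f a ≤ s} =
        (∫ s in Iio (0:ℝ), μ {a | f a ≤ s}) + ∫ s in Ico 0 (-k), μ {a | f a ≤ s} := by
      rw [← setIntegral_union hdisj' measurableSet_Ico ?_ ?_, huni]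
      · have he : EqOn (fun s => μ {a | f a ≤ s}) (fun _ => (0:ℝ)) (Iio 0) := by
          intro s hs
          have h2 : {a | f a ≤ s} = ∅ := by
            ext a
            simp only [mem_setOf_eq, mem_empty_iff_false, iff_false, not_le]
            exact lt_of_lt_of_le hs (hf0 a)
          simp only [h2, uc_empty hμ]
        rw [integrableOn_congr_fun he measurableSet_Iio]
        exact integrableOn_zero
      · exact Measure.integrableOn_of_bounded measure_Ico_lt_top.ne
          (sub_antitone hμ f).measurable.aestronglyMeasurable
          (ae_of_all _ (fun s => uc_norm hμ _))
    unfold cInt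
    rw [hpos, hneg, hnegsplit, hzero, hIco, hstrict, zero_add]
    have h2 := hsplit
    unfold posL at h2 ⊢
    linarith

lemma posL_add_const_eq (hμ : IsUltracharge μ) {f : α → ℝ} (hf0 : ∀ i, 0 ≤ f i) {C : ℝ}
    (hfC : ∀ i, f i ≤ C) {c : ℝ} (hc : 0 ≤ c) :
    posL μ (fun i => f i + c) = posL μ f + c := by
  have h2 := cInt_eq_posL hμ (f := fun i => f i + c) (fun i => by have := hf0 i; linarith)
  rw [← h2, cInt_add_const hμ hf0 hfC c]

lemma posL_smul (hμ : IsUltracharge μ) (f : α → ℝ) {m : ℝ} (hm : 0 < m) :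
    posL μ (fun i => m * f i) = m * posL μ f := by
  unfold posL
  have hs : ∀ t : ℝ, {a | t ≤ m * f a} = {a | t * m⁻¹ ≤ f a} := by
    intro t; ext a
    simp only [mem_setOf_eq]
    rw [← div_eq_mul_inv, div_le_iff₀ hm, mul_comm]
  simp_rw [hs]
  have h2 : ∫ t in Ioi (0:ℝ), μ {a | t * m⁻¹ ≤ f a} =
      (m⁻¹)⁻¹ • ∫ t in Ioi ((0:ℝ) * m⁻¹), μ {a | t ≤ f a} :=
    integral_comp_mul_right_Ioi (fun s => μ {a | s ≤ f a}) 0 (inv_pos.2 hm)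
  rw [h2, inv_inv, zero_mul, smul_eq_mul]

lemma posL_nat (hμ : IsUltracharge μ) {ε : ℝ} (hε : 0 < ε) (k : α → ℕ) (N : ℕ)
    (hk : ∀ i, k i ≤ N) :
    posL μ (fun i => ε * k i) = ε * ∑ j ∈ Finset.range N, μ {i | j + 1 ≤ k i} := by
  have hbd : ∀ i, ε * (k i : ℝ) ≤ ε * N :=
    fun i => mul_le_mul_of_nonneg_left (Nat.cast_le.2 (hk i)) hε.le
  have hNnn : (0:ℝ) ≤ ε * N := by positivity
  have hvanish : ∫ t in Ioi (ε * (N:ℝ)), μ {a | t ≤ ε * (k a : ℝ)} = 0 := by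
    have he : EqOn (fun t => μ {a | t ≤ ε * (k a : ℝ)}) (fun _ => (0:ℝ)) (Ioi (ε * N)) :=
      fun t ht => surv_vanish hμ hbd ht
    rw [setIntegral_congr_fun measurableSet_Ioi he, integral_zero]
  have hdisj : Disjoint (Ioc (0:ℝ) (ε*N)) (Ioi (ε*(N:ℝ))) := by
    rw [Set.disjoint_left]
    intro x hx hx'
    exact absurd hx' (not_lt.2 hx.2)
  have hsplit : posL μ (fun i => ε * k i) =
      ∫ t in Ioc (0:ℝ) (ε*N), μ {a | t ≤ ε * (k a : ℝ)} := by
    unfold posL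
    rw [← Ioc_union_Ioi_eq_Ioi hNnn,
      setIntegral_union hdisj measurableSet_Ioi
        ((int_surv hμ hbd 0).mono_set Ioc_subset_Ioi_self) (int_surv hμ hbd (ε*N)),
      hvanish, add_zero]
  have hval : ∀ j : ℕ, ∫ t in Ioc (ε*(j:ℝ)) (ε*((j:ℝ)+1)), μ {a | t ≤ ε * (k a : ℝ)} =
      ε * μ {i | j + 1 ≤ k i} := by
    intro j
    have he : EqOn (fun t => μ {a | t ≤ ε * (k a : ℝ)}) (fun _ => μ {i | j + 1 ≤ k i})
        (Ioc (ε*(j:ℝ)) (ε*((j:ℝ)+1))) := by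
      intro t ht
      simp only
      congr 1
      ext i
      simp only [mem_setOf_eq]
      constructor
      · intro h
        have h1 : ε * (j:ℝ) < ε * (k i : ℝ) := lt_of_lt_of_le ht.1 h
        have h2 : (j:ℝ) < (k i : ℝ) := lt_of_mul_lt_mul_left h1 hε.le
        have h3 : j < k i := by exact_mod_cast h2
        omega
      · intro h
        have h1 : ((j:ℝ)+1) ≤ (k i : ℝ) := by exact_mod_cast h
        calc t ≤ ε * ((j:ℝ)+1) := ht.2
          _ ≤ ε * (k i : ℝ) := mul_le_mul_of_nonneg_left h1 hε.le
    rw [setIntegral_congr_fun measurableSet_Ioc he, setIntegral_const, measureReal_def, Real.volume_Ioc,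
      smul_eq_mul, ENNReal.toReal_ofReal (by nlinarith : (0:ℝ) ≤ ε*((j:ℝ)+1) - ε*(j:ℝ)),
      show ε*((j:ℝ)+1) - ε*(j:ℝ) = ε by ring]
  have hinteg : ∀ j : ℕ, j < N → IntervalIntegrable (fun t => μ {a | t ≤ ε * (k a : ℝ)})
      volume (ε*(j:ℝ)) (ε*((j:ℝ)+1)) := by
    intro j _
    rw [intervalIntegrable_iff, uIoc_of_le (by nlinarith : ε*(j:ℝ) ≤ ε*((j:ℝ)+1))]
    exact (int_surv hμ hbd 0).mono_set
      (fun x hx => lt_of_le_of_lt (by positivity : (0:ℝ) ≤ ε*(j:ℝ)) hx.1)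
  have hadj := intervalIntegral.sum_integral_adjacent_intervals
    (a := fun j : ℕ => ε * (j:ℝ)) (μ := volume)
    (f := fun t => μ {a | t ≤ ε * (k a : ℝ)}) (n := N)
    (by intro j hj; have := hinteg j hj; push_cast; convert this using 2 <;> push_cast <;> ring)
  rw [hsplit, ← intervalIntegral.integral_of_le hNnn]
  have h0 : ε * ((0:ℕ):ℝ) = 0 := by push_cast; ring
  rw [← show ε * ((N:ℕ):ℝ) = ε * (N:ℝ) from rfl] at *
  rw [show (0:ℝ) = ε * ((0:ℕ):ℝ) by rw [h0]]
  rw [← hadj, Finset.mul_sum]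
  refine Finset.sum_congr rfl (fun j _ => ?_)
  rw [intervalIntegral.integral_of_le (by push_cast; nlinarith : ε*((j:ℕ):ℝ) ≤ ε*(((j+1:ℕ)):ℝ))]
  have := hval j
  rw [show (((j+1:ℕ)):ℝ) = ((j:ℝ)+1) by push_cast; ring]
  exact this

lemma posL_nat_add (hμ : IsUltracharge μ) {ε : ℝ} (hε : 0 < ε) (k l : α → ℕ) (n : ℕ)
    (hk : ∀ i, k i ≤ n) (hl : ∀ i, l i ≤ n) :
    posL μ (fun i => ε * ((k i + l i : ℕ) : ℝ)) =
      posL μ (fun i => ε * k i) + posL μ (fun i => ε * l i) := by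
  classical
  set G := Finset.range (n+1) ×ˢ Finset.range (n+1) with hG
  set A : ℕ × ℕ → Set α := fun pq => {i | k i = pq.1 ∧ l i = pq.2} with hA
  have hkey : ∀ (w : ℕ × ℕ → ℕ) (v : α → ℕ), (∀ i, v i = w (k i, l i)) → ∀ j : ℕ,
      μ {i | j + 1 ≤ v i} = ∑ pq ∈ G.filter (fun pq => j + 1 ≤ w pq), μ (A pq) := by
    intro w v hv j
    rw [← uc_sum hμ _ A ?_]
    · congr 1
      ext i
      simp only [mem_iUnion, Finset.mem_filter, hG, Finset.mem_product, Finset.mem_range,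
        mem_setOf_eq, hA, exists_prop]
      constructor
      · intro h
        exact ⟨(k i, l i), ⟨⟨Nat.lt_succ_of_le (hk i), Nat.lt_succ_of_le (hl i)⟩,
          by rw [← hv i]; exact h⟩, rfl, rfl⟩
      · rintro ⟨pq, ⟨_, hw⟩, hk', hl'⟩
        rw [hv i, show (k i, l i) = pq from Prod.ext hk' hl']
        exact hw
    · intro pq _ pq' _ hne
      rw [Set.disjoint_left]
      rintro i ⟨h1, h2⟩ ⟨h3, h4⟩
      exact hne (Prod.ext (h1.symm.trans h3) (h2.symm.trans h4))
  have hcount : ∀ (c : ℝ) (p N : ℕ), p ≤ N →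
      ∑ j ∈ Finset.range N, (if j + 1 ≤ p then c else 0) = (p : ℝ) * c := by
    intro c p N hp
    rw [← Finset.sum_filter]
    have hfil : (Finset.range N).filter (fun j => j + 1 ≤ p) = Finset.range p := by
      ext j; simp only [Finset.mem_filter, Finset.mem_range]; omega
    rw [hfil, Finset.sum_const, Finset.card_range, nsmul_eq_mul]
  have hT : ∀ (w : ℕ × ℕ → ℕ) (v : α → ℕ), (∀ i, v i = w (k i, l i)) →
      (∀ pq ∈ G, w pq ≤ 2*n) →
      ∑ j ∈ Finset.range (2*n), μ {i | j + 1 ≤ v i} = ∑ pq ∈ G, (w pq : ℝ) * μ (A pq) := by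
    intro w v hv hw
    calc ∑ j ∈ Finset.range (2*n), μ {i | j + 1 ≤ v i}
        = ∑ j ∈ Finset.range (2*n), ∑ pq ∈ G, (if j + 1 ≤ w pq then μ (A pq) else 0) := by
          refine Finset.sum_congr rfl (fun j _ => ?_)
          rw [hkey w v hv j, Finset.sum_filter]
      _ = ∑ pq ∈ G, ∑ j ∈ Finset.range (2*n), (if j + 1 ≤ w pq then μ (A pq) else 0) :=
          Finset.sum_comm
      _ = ∑ pq ∈ G, (w pq : ℝ) * μ (A pq) :=
          Finset.sum_congr rfl (fun pq hpq => hcount _ _ _ (hw pq hpq))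
  have hk2 : ∀ i, k i ≤ 2*n := fun i => (hk i).trans (by omega)
  have hl2 : ∀ i, l i ≤ 2*n := fun i => (hl i).trans (by omega)
  have hkl2 : ∀ i, (fun i => k i + l i) i ≤ 2*n := fun i => by
    have := hk i; have := hl i; simp only []; omega
  have hGmem : ∀ pq ∈ G, pq.1 ≤ n ∧ pq.2 ≤ n := by
    intro pq hpq
    rw [hG, Finset.mem_product, Finset.mem_range, Finset.mem_range] at hpq
    omega
  rw [posL_nat hμ hε k (2*n) hk2, posL_nat hμ hε l (2*n) hl2,
    posL_nat hμ hε (fun i => k i + l i) (2*n) hkl2]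
  rw [hT Prod.fst k (fun i => rfl) (fun pq hpq => (hGmem pq hpq).1.trans (by omega)),
    hT Prod.snd l (fun i => rfl) (fun pq hpq => (hGmem pq hpq).2.trans (by omega)),
    hT (fun pq => pq.1 + pq.2) (fun i => k i + l i) (fun i => rfl)
      (fun pq hpq => by have := hGmem pq hpq; omega)]
  rw [← mul_add, ← Finset.sum_add_distrib]
  congr 1
  refine Finset.sum_congr rfl (fun pq _ => ?_)
  push_cast
  ring

lemma posL_subadd (hμ : IsUltracharge μ) {f g : α → ℝ} (hf0 : ∀ i, 0 ≤ f i) {C : ℝ}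
    (hfC : ∀ i, f i ≤ C) (hg0 : ∀ i, 0 ≤ g i) (hgC : ∀ i, g i ≤ C) :
    posL μ (fun i => f i + g i) ≤ posL μ f + posL μ g := by
  refine le_add_eps (fun ε hε => ?_)
  set δ := ε / 2 with hδdef
  have hδ : 0 < δ := by rw [hδdef]; linarith
  set k : α → ℕ := fun i => ⌊f i / δ⌋₊ with hkdef
  set l : α → ℕ := fun i => ⌊g i / δ⌋₊ with hldef
  set n : ℕ := ⌈C / δ⌉₊ with hndef
  have hdivf : ∀ i, f i / δ ≤ C / δ := fun i => by gcongr; exact hfC i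
  have hdivg : ∀ i, g i / δ ≤ C / δ := fun i => by gcongr; exact hgC i
  have hkn : ∀ i, k i ≤ n := fun i => le_trans (Nat.floor_mono (hdivf i)) (Nat.floor_le_ceil _)
  have hln : ∀ i, l i ≤ n := fun i => le_trans (Nat.floor_mono (hdivg i)) (Nat.floor_le_ceil _)
  have hfl : ∀ i, δ * (k i : ℝ) ≤ f i := by
    intro i
    calc δ * (k i:ℝ) ≤ δ * (f i / δ) :=
          mul_le_mul_of_nonneg_left (Nat.floor_le (div_nonneg (hf0 i) hδ.le)) hδ.le
      _ = f i := by field_simp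
  have hgl : ∀ i, δ * (l i : ℝ) ≤ g i := by
    intro i
    calc δ * (l i:ℝ) ≤ δ * (g i / δ) :=
          mul_le_mul_of_nonneg_left (Nat.floor_le (div_nonneg (hg0 i) hδ.le)) hδ.le
      _ = g i := by field_simp
  have hflt : ∀ i, f i < δ * (k i : ℝ) + δ := by
    intro i
    have h1 : f i / δ < (k i:ℝ) + 1 := Nat.lt_floor_add_one _
    calc f i < ((k i:ℝ) + 1) * δ := (div_lt_iff₀ hδ).mp h1
      _ = δ * (k i:ℝ) + δ := by ring
  have hglt : ∀ i, g i < δ * (l i : ℝ) + δ := by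
    intro i
    have h1 : g i / δ < (l i:ℝ) + 1 := Nat.lt_floor_add_one _
    calc g i < ((l i:ℝ) + 1) * δ := (div_lt_iff₀ hδ).mp h1
      _ = δ * (l i:ℝ) + δ := by ring
  have hkb : ∀ i, δ * (k i : ℝ) ≤ δ * (n:ℝ) :=
    fun i => mul_le_mul_of_nonneg_left (Nat.cast_le.2 (hkn i)) hδ.le
  have hlb : ∀ i, δ * (l i : ℝ) ≤ δ * (n:ℝ) :=
    fun i => mul_le_mul_of_nonneg_left (Nat.cast_le.2 (hln i)) hδ.le
  have step1 : posL μ (fun i => f i + g i) ≤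
      posL μ (fun i => (δ * (k i:ℝ) + δ * (l i:ℝ)) + 2*δ) := by
    refine posL_mono hμ (fun i => ?_) (C := δ*(n:ℝ) + δ*(n:ℝ) + 2*δ) (fun i => ?_)
    · have := hflt i; have := hglt i; linarith
    · have := hkb i; have := hlb i; linarith
  have step2 : posL μ (fun i => (δ * (k i:ℝ) + δ * (l i:ℝ)) + 2*δ) =
      posL μ (fun i => δ * (k i:ℝ) + δ * (l i:ℝ)) + 2*δ := by
    refine posL_add_const_eq hμ (fun i => ?_) (C := δ*(n:ℝ) + δ*(n:ℝ)) (fun i => ?_)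
      (by linarith : (0:ℝ) ≤ 2*δ)
    · have h1 : (0:ℝ) ≤ δ * (k i:ℝ) := by positivity
      have h2 : (0:ℝ) ≤ δ * (l i:ℝ) := by positivity
      linarith
    · have := hkb i; have := hlb i; linarith
  have step3 : posL μ (fun i => δ * (k i:ℝ) + δ * (l i:ℝ)) =
      posL μ (fun i => δ * ((k i + l i : ℕ) : ℝ)) := by
    have he : (fun i => δ * (k i:ℝ) + δ * (l i:ℝ)) =
        fun i => δ * ((k i + l i : ℕ) : ℝ) := by
      funext i; push_cast; ring
    rw [he]
  have step4 := posL_nat_add hμ hδ k l n hkn hln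
  have step5 : posL μ (fun i => δ * (k i:ℝ)) ≤ posL μ f := posL_mono hμ hfl hfC
  have step6 : posL μ (fun i => δ * (l i:ℝ)) ≤ posL μ g := posL_mono hμ hgl hgC
  have : (2:ℝ) * δ = ε := by rw [hδdef]; ring
  linarith

lemma posL_jensen (hμ : IsUltracharge μ)
    (lam : ℝ → ℝ) (hmono : MonotoneOn lam (Set.Ici 0)) (hcont : ContinuousOn lam (Set.Ici 0))
    (hconc : ConcaveOn ℝ (Set.Ici 0) lam) (hnn : ∀ x ∈ Set.Ici (0:ℝ), 0 ≤ lam x)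
    (h0 : lam 0 = 0) {d : α → ℝ} (hd0 : ∀ i, 0 ≤ d i) (hd1 : ∀ i, d i ≤ 1) :
    posL μ (fun i => lam (d i)) ≤ lam (posL μ d) := by
  have hc0 : 0 ≤ posL μ d := posL_nonneg hμ d
  set c := posL μ d with hc
  have hlamd0 : ∀ i, 0 ≤ lam (d i) := fun i => hnn _ (mem_Ici.2 (hd0 i))
  have hlamd1 : ∀ i, lam (d i) ≤ lam 1 :=
    fun i => hmono (mem_Ici.2 (hd0 i)) (mem_Ici.2 zero_le_one) (hd1 i)
  have hbound_gen : ∀ r : ℝ, 0 ≤ r → (∀ t : ℝ, r < t → μ {a | t ≤ lam (d a)} = 0) →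
      posL μ (fun i => lam (d i)) ≤ r := by
    intro r hr hvan
    have hdisj : Disjoint (Ioc (0:ℝ) r) (Ioi r) := by
      rw [Set.disjoint_left]
      intro x hx hx'
      exact absurd hx' (not_lt.2 hx.2)
    have hsp : posL μ (fun i => lam (d i)) = ∫ t in Ioc (0:ℝ) r, μ {a | t ≤ lam (d a)} := by
      unfold posL
      rw [← Ioc_union_Ioi_eq_Ioi hr,
        setIntegral_union hdisj measurableSet_Ioi
          ((int_surv hμ hlamd1 0).mono_set Ioc_subset_Ioi_self) (int_surv hμ hlamd1 r)]
      have he : EqOn (fun t => μ {a | t ≤ lam (d a)}) (fun _ => (0:ℝ)) (Ioi r) :=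
        fun t ht => hvan t ht
      rw [setIntegral_congr_fun measurableSet_Ioi he, integral_zero, add_zero]
    rw [hsp]
    calc ∫ t in Ioc (0:ℝ) r, μ {a | t ≤ lam (d a)}
        ≤ ∫ _ in Ioc (0:ℝ) r, (1:ℝ) := by
          refine setIntegral_mono_on
            ((int_surv hμ hlamd1 0).mono_set Ioc_subset_Ioi_self)
            (integrableOn_const measure_Ioc_lt_top.ne) measurableSet_Ioc
            (fun t _ => uc_le_one hμ _)
      _ = r := by
          rw [setIntegral_const, measureReal_def, Real.volume_Ioc, smul_eq_mul, mul_one,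
            ENNReal.toReal_ofReal (by linarith : (0:ℝ) ≤ r - 0), sub_zero]
  rcases eq_or_lt_of_le hc0 with hceq | hcpos
  · -- c = 0
    have hzero : ∀ r : ℝ, 0 < r → μ {i | r ≤ d i} = 0 := by
      intro r hr
      by_contra hne
      have hpos : 0 < μ {i | r ≤ d i} := lt_of_le_of_ne (hμ.1 _) (Ne.symm hne)
      have h1 : ∫ t in Ioc (0:ℝ) r, (fun _ => μ {i | r ≤ d i}) t ≤
          ∫ t in Ioc (0:ℝ) r, μ {a | t ≤ d a} := by
        refine setIntegral_mono_on (integrableOn_const measure_Ioc_lt_top.ne)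
          ((int_surv hμ hd1 0).mono_set Ioc_subset_Ioi_self) measurableSet_Ioc (fun t ht => ?_)
        exact uc_mono hμ (fun a (ha : r ≤ d a) => le_trans ht.2 ha)
      have h2 : ∫ t in Ioc (0:ℝ) r, μ {a | t ≤ d a} ≤ posL μ d := by
        refine setIntegral_mono_set (int_surv hμ hd1 0)
          (ae_of_all _ (fun t => hμ.1 _)) (HasSubset.Subset.eventuallyLE Ioc_subset_Ioi_self)
      have h3 : ∫ t in Ioc (0:ℝ) r, (fun _ => μ {i | r ≤ d i}) t = r * μ {i | r ≤ d i} := by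
        rw [setIntegral_const, smul_eq_mul, measureReal_def, Real.volume_Ioc,
          ENNReal.toReal_ofReal (by linarith : (0:ℝ) ≤ r - 0), sub_zero]
      rw [← hc, ← hceq] at h2
      nlinarith
    have hbound : ∀ r : ℝ, 0 < r → posL μ (fun i => lam (d i)) ≤ lam r := by
      intro r hr
      refine hbound_gen (lam r) (hnn r (mem_Ici.2 hr.le)) (fun t ht => ?_)
      have hsub2 : {a | t ≤ lam (d a)} ⊆ {i | r ≤ d i} := by
        intro a ha
        by_contra hlt
        simp only [mem_setOf_eq, not_le] at hlt
        have hle2 : lam (d a) ≤ lam r :=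
          hmono (mem_Ici.2 (hd0 a)) (mem_Ici.2 hr.le) hlt.le
        have ha' : t ≤ lam (d a) := ha
        linarith
      have hm := uc_mono hμ hsub2
      have h0' := hzero r hr
      have hge := hμ.1 {a | t ≤ lam (d a)}
      linarith
    have htend : Filter.Tendsto lam (nhdsWithin 0 (Ioi 0)) (nhds (lam 0)) := by
      have h1 : ContinuousWithinAt lam (Ici 0) 0 := hcont 0 (mem_Ici.2 le_rfl)
      exact h1.tendsto.mono_left (nhdsWithin_mono 0 Ioi_subset_Ici_self)
    have hle : posL μ (fun i => lam (d i)) ≤ lam 0 := by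
      refine ge_of_tendsto htend ?_
      filter_upwards [self_mem_nhdsWithin] with r hr
      exact hbound r hr
    rw [← hceq]
    exact hle
  · -- 0 < c
    set S := (fun u => (lam u - lam c) / (u - c)) '' Ioi c with hS
    have hSne : S.Nonempty := ⟨_, ⟨c+1, by rw [mem_Ioi]; linarith, rfl⟩⟩
    have hbdd : BddAbove S := by
      refine ⟨(lam c - lam (c/2))/(c - c/2), ?_⟩
      rintro s ⟨u, hu, rfl⟩
      exact hconc.slope_anti_adjacent (mem_Ici.2 (by linarith : (0:ℝ) ≤ c/2))
        (mem_Ici.2 (by rw [mem_Ioi] at hu; linarith)) (by linarith) hu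
    set m := sSup S with hm
    have hm_ge : ∀ u, c < u → (lam u - lam c)/(u - c) ≤ m :=
      fun u hu => le_csSup hbdd ⟨u, hu, rfl⟩
    have hm_le : ∀ t, 0 ≤ t → t < c → m ≤ (lam c - lam t)/(c - t) := by
      intro t ht htc
      refine csSup_le hSne ?_
      rintro s ⟨u, hu, rfl⟩
      exact hconc.slope_anti_adjacent (mem_Ici.2 ht)
        (mem_Ici.2 (by rw [mem_Ioi] at hu; linarith)) htc hu
    have hm0 : 0 ≤ m := by
      have h1 : (lam (c+1) - lam c)/((c+1) - c) ≤ m := hm_ge (c+1) (by linarith)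
      have h2 : lam c ≤ lam (c+1) :=
        hmono (mem_Ici.2 hc0) (mem_Ici.2 (by linarith)) (by linarith)
      have h3 : (0:ℝ) ≤ (lam (c+1) - lam c)/((c+1) - c) := by
        apply div_nonneg <;> linarith
      linarith
    have hsupp : ∀ t, 0 ≤ t → lam t ≤ lam c + m * (t - c) := by
      intro t ht
      rcases lt_trichotomy t c with h | h | h
      · have h1 := hm_le t ht h
        have h2 : m * (c - t) ≤ lam c - lam t := by
          rw [← le_div_iff₀ (by linarith : (0:ℝ) < c - t)] at *
          linarith [h1]
        nlinarith
      · rw [h]; simp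
      · have h1 := hm_ge t h
        have h2 : lam t - lam c ≤ m * (t - c) := by
          rw [div_le_iff₀ (by linarith : (0:ℝ) < t - c)] at h1
          linarith
        linarith
    have hk0 : 0 ≤ lam c - m * c := by
      have := hsupp 0 le_rfl
      rw [h0] at this
      linarith
    have hstep1 : posL μ (fun i => lam (d i)) ≤
        posL μ (fun i => (m * d i) + (lam c - m * c)) := by
      refine posL_mono hμ (fun i => ?_) (C := m * 1 + (lam c - m * c)) (fun i => ?_)
      · have := hsupp (d i) (hd0 i)
        nlinarith
      · have h1 : m * d i ≤ m * 1 := mul_le_mul_of_nonneg_left (hd1 i) hm0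
        linarith
    have hstep2 : posL μ (fun i => (m * d i) + (lam c - m * c)) =
        posL μ (fun i => m * d i) + (lam c - m * c) := by
      refine posL_add_const_eq hμ (fun i => mul_nonneg hm0 (hd0 i)) (C := m * 1)
        (fun i => mul_le_mul_of_nonneg_left (hd1 i) hm0) hk0
    rcases eq_or_lt_of_le hm0 with hmeq | hmpos
    · have hz : posL μ (fun i => m * d i) = 0 := by
        have he : EqOn (fun t => μ {a | t ≤ m * d a}) (fun _ => (0:ℝ)) (Ioi 0) := by
          intro t ht
          have hs2 : {a | t ≤ m * d a} = ∅ := by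
            rw [mem_Ioi] at ht
            ext a
            simp only [mem_setOf_eq, mem_empty_iff_false, iff_false, not_le, ← hmeq, zero_mul]
            exact ht
          simp only [hs2, uc_empty hμ]
        unfold posL
        rw [setIntegral_congr_fun measurableSet_Ioi he, integral_zero]
      have hfin : lam c - m * c = lam c := by rw [← hmeq]; ring
      rw [hstep2, hz, zero_add, hfin] at hstep1
      exact hstep1
    · have hz := posL_smul hμ d hmpos
      rw [hstep2, hz, ← hc] at hstep1
      have : m * c + (lam c - m * c) = lam c := by ring
      linarith

end UCAux

open UCAux

/-- Jensen-type estimate for ultramean relations: if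
`R : M → ℝ` is `λ`-continuous for a concave increasing modulus `λ`, then the
ultramean relation `R̄([a]) = ∫ R(aᵢ) dμ` is `λ`-continuous for the ultramean
metric `d([a],[b]) = ∫ d(aᵢ,bᵢ) dμ`. -/
theorem ultramean_relation_modulus {I M : Type*} [MetricSpace M]
    (hdiam : ∀ x y : M, dist x y ≤ 1)
    (μ : Set I → ℝ) (hμ : IsUltracharge μ)
    (lam : ℝ → ℝ)
    (hmono : MonotoneOn lam (Set.Ici 0))
    (hcont : ContinuousOn lam (Set.Ici 0))
    (hconc : ConcaveOn ℝ (Set.Ici 0) lam)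
    (hnn : ∀ x ∈ Set.Ici (0 : ℝ), 0 ≤ lam x)
    (h0 : lam 0 = 0)
    (R : M → ℝ) (hR : ∀ x y : M, |R x - R y| ≤ lam (dist x y)) :
    ∀ a b : I → M,
      cInt μ (fun i => R (a i)) - cInt μ (fun i => R (b i)) ≤
        lam (cInt μ (fun i => dist (a i) (b i))) := by
  intro a b
  have hne : Nonempty I := by
    by_contra h
    rw [not_nonempty_iff] at h
    have h1 : (Set.univ : Set I) = ∅ := Set.univ_eq_empty_iff.2 h
    have h2 := hμ.2.1
    rw [h1, uc_empty hμ] at h2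
    norm_num at h2
  obtain ⟨i0⟩ := hne
  set K := R (b i0) - lam 1 with hK
  have hL0 : 0 ≤ lam 1 := hnn 1 (Set.mem_Ici.2 zero_le_one)
  have habs : ∀ x : M, |R x - R (b i0)| ≤ lam 1 := fun x =>
    (hR x (b i0)).trans (hmono (Set.mem_Ici.2 dist_nonneg) (Set.mem_Ici.2 zero_le_one)
      (hdiam _ _))
  set f := fun i => R (a i) - K with hf
  set g := fun i => R (b i) - K with hg
  have hf0 : ∀ i, 0 ≤ f i := fun i => by
    have h1 := (abs_le.1 (habs (a i))).1
    rw [hf, hK]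
    simp only []
    linarith
  have hfC : ∀ i, f i ≤ 2 * lam 1 := fun i => by
    have h1 := (abs_le.1 (habs (a i))).2
    rw [hf, hK]
    simp only []
    linarith
  have hg0 : ∀ i, 0 ≤ g i := fun i => by
    have h1 := (abs_le.1 (habs (b i))).1
    rw [hg, hK]
    simp only []
    linarith
  have hgC : ∀ i, g i ≤ 2 * lam 1 := fun i => by
    have h1 := (abs_le.1 (habs (b i))).2
    rw [hg, hK]
    simp only []
    linarith
  have hfa : (fun i => R (a i)) = fun i => f i + K := by
    funext i; simp only [hf]; ring
  have hgb : (fun i => R (b i)) = fun i => g i + K := by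
    funext i; simp only [hg]; ring
  rw [hfa, hgb, cInt_add_const hμ hf0 hfC K, cInt_add_const hμ hg0 hgC K]
  set d := fun i => dist (a i) (b i) with hd
  have hd0 : ∀ i, 0 ≤ d i := fun _ => dist_nonneg
  have hd1 : ∀ i, d i ≤ 1 := fun i => hdiam _ _
  rw [cInt_eq_posL hμ hd0]
  have hpt : ∀ i, f i ≤ g i + lam (d i) := fun i => by
    have h1 : R (a i) - R (b i) ≤ |R (a i) - R (b i)| := le_abs_self _
    have h2 := hR (a i) (b i)
    rw [hf, hg, hd]
    simp only []
    linarith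
  have hlam1 : ∀ i, lam (d i) ≤ lam 1 :=
    fun i => hmono (mem_Ici.2 (hd0 i)) (mem_Ici.2 zero_le_one) (hd1 i)
  have hlamd0 : ∀ i, 0 ≤ lam (d i) := fun i => hnn _ (mem_Ici.2 (hd0 i))
  have key1 : posL μ f ≤ posL μ (fun i => g i + lam (d i)) :=
    posL_mono hμ hpt (C := 2 * lam 1 + lam 1)
      (fun i => by have := hgC i; have := hlam1 i; linarith)
  have key2 : posL μ (fun i => g i + lam (d i)) ≤ posL μ g + posL μ (fun i => lam (d i)) :=
    posL_subadd hμ hg0 (C := 2 * lam 1) hgC hlamd0 (fun i => (hlam1 i).trans (by linarith))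
  have key3 : posL μ (fun i => lam (d i)) ≤ lam (posL μ d) :=
    posL_jensen hμ lam hmono hcont hconc hnn h0 hd0 hd1
  linarith
end

section
/- (Jensen's inequality for charges) If μ is a finitely additive probability measure on a Boolean algebra 𝒜 ⊆ P(I), λ : [0,∞) → [0,∞) is concave and continuous, and f : I → [0,∞) is a bounded (𝒜,𝒜(ℝ))-measurable function, then ∫ λ∘f dμ ≤ λ(∫ f dμ). -/
open MeasureTheory

/-- An antitone function vanishing beyond `C` is integrable on `Ioi c`. -/
lemma antitone_tail_integrableOn {H : ℝ → ℝ} (hH : Antitone H) {c C : ℝ} (hcC : c ≤ C)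
    (hv : ∀ t, C < t → H t = 0) : IntegrableOn H (Set.Ioi c) := by
  have h1 : IntegrableOn H (Set.Ioc c C) :=
    (AntitoneOn.integrableOn_isCompact (isCompact_Icc (a := c) (b := C))
      (hH.antitoneOn _)).mono_set Set.Ioc_subset_Icc_self
  have h2 : IntegrableOn H (Set.Ioi C) := by
    refine (integrableOn_congr_fun (g := fun _ => (0:ℝ)) (fun t ht => hv t ht)
      measurableSet_Ioi).2 integrableOn_zero
  rw [← Set.Ioc_union_Ioi_eq_Ioi hcC]
  exact h1.union h2

/-- Jensen's inequality for charges: if `μ` is a finitely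
additive probability measure on a Boolean algebra `𝒜 ⊆ P(I)`, `λ : [0,∞) → [0,∞)`
is concave and continuous, and `f : I → [0,∞)` is bounded and `(𝒜,𝒜(ℝ))`-measurable,
then `∫ λ∘f dμ ≤ λ(∫ f dμ)`. -/
theorem jensen_charge {I : Type*} (𝒜 : Set (Set I)) (μ : Set I → ℝ)
    (halg_univ : Set.univ ∈ 𝒜)
    (halg_compl : ∀ A ∈ 𝒜, Aᶜ ∈ 𝒜)
    (halg_union : ∀ A ∈ 𝒜, ∀ B ∈ 𝒜, A ∪ B ∈ 𝒜)
    (hpos : ∀ A ∈ 𝒜, 0 ≤ μ A)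
    (hone : μ Set.univ = 1)
    (hadd : ∀ A ∈ 𝒜, ∀ B ∈ 𝒜, Disjoint A B → μ (A ∪ B) = μ A + μ B)
    (lam : ℝ → ℝ)
    (hconc : ConcaveOn ℝ (Set.Ici 0) lam)
    (hcont : ContinuousOn lam (Set.Ici 0))
    (hnn : ∀ x ∈ Set.Ici (0 : ℝ), 0 ≤ lam x)
    (f : I → ℝ) (hf0 : ∀ i, 0 ≤ f i) (hfb : ∃ B : ℝ, ∀ i, f i ≤ B)
    (hfmeas : ∀ u v : ℝ, f ⁻¹' Set.Ico u v ∈ 𝒜) :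
    cInt μ (fun i => lam (f i)) ≤ lam (cInt μ f) := by
  classical
  -- Boolean algebra closure facts
  have hempty : (∅ : Set I) ∈ 𝒜 := by simpa using halg_compl _ halg_univ
  have hinter : ∀ A ∈ 𝒜, ∀ B ∈ 𝒜, A ∩ B ∈ 𝒜 := by
    intro A hA B hB
    have h : A ∩ B = (Aᶜ ∪ Bᶜ)ᶜ := by rw [Set.compl_union, compl_compl, compl_compl]
    rw [h]
    exact halg_compl _ (halg_union _ (halg_compl _ hA) _ (halg_compl _ hB))
  have hμempty : μ ∅ = 0 := by
    have h := hadd ∅ hempty ∅ hempty (by simp)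
    simp only [Set.union_empty] at h
    linarith
  have hmono : ∀ A ∈ 𝒜, ∀ B ∈ 𝒜, A ⊆ B → μ A ≤ μ B := by
    intro A hA B hB hAB
    have hBA : B ∩ Aᶜ ∈ 𝒜 := hinter _ hB _ (halg_compl _ hA)
    have hd : Disjoint A (B ∩ Aᶜ) := Set.disjoint_left.2 (fun x hx hx' => hx'.2 hx)
    have hu : A ∪ (B ∩ Aᶜ) = B := by
      ext x
      constructor
      · rintro (h | ⟨h, _⟩)
        exacts [hAB h, h]
      · intro h
        by_cases hxA : x ∈ A
        exacts [Or.inl hxA, Or.inr ⟨h, hxA⟩]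
    have h1 := hadd _ hA _ hBA hd
    rw [hu] at h1
    have h2 := hpos _ hBA
    linarith
  obtain ⟨B, hB⟩ := hfb
  rcases isEmpty_or_nonempty I with hI | hI
  · exfalso
    have h : (Set.univ : Set I) = ∅ := Set.univ_eq_empty_iff.2 hI
    rw [h, hμempty] at hone
    linarith
  obtain ⟨i₀⟩ := hI
  have hB0 : (0:ℝ) ≤ B := le_trans (hf0 i₀) (hB i₀)
  -- super-level sets of f are in the algebra
  have hIci : ∀ c : ℝ, {i | c ≤ f i} ∈ 𝒜 := by
    intro c
    have h : {i | c ≤ f i} = f ⁻¹' Set.Ico c (B + 1) := by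
      ext i
      simp only [Set.mem_setOf_eq, Set.mem_preimage, Set.mem_Ico]
      exact ⟨fun h => ⟨h, lt_of_le_of_lt (hB i) (by linarith)⟩, fun h => h.1⟩
    rw [h]
    exact hfmeas _ _
  -- lam is monotone on [0, ∞)
  have hlam_mono : MonotoneOn lam (Set.Ici 0) := by
    intro x hx y hy hxy
    by_contra hlt
    push_neg at hlt
    have hxy' : x < y := by
      rcases lt_or_eq_of_le hxy with h | h
      · exact h
      · exact absurd h (by intro hh; rw [hh] at hlt; exact lt_irrefl _ hlt)
    have hd0 : 0 < lam x - lam y := by linarith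
    have hly : 0 ≤ lam y := hnn y hy
    set d := lam x - lam y with hddef
    have h1 : 0 < y - x := sub_pos.2 hxy'
    have h2 : 0 < lam y / d + 1 := by
      have : 0 ≤ lam y / d := div_nonneg hly hd0.le
      linarith
    set z := y + (y - x) * (lam y / d + 1) with hzdef
    have hyz : y < z := by
      have := mul_pos h1 h2
      rw [hzdef]; linarith
    have hz0 : z ∈ Set.Ici (0:ℝ) := Set.mem_Ici.2 (le_trans hy (le_of_lt hyz))
    have hslope := hconc.slope_anti_adjacent hx hz0 hxy' hyz
    rw [div_le_div_iff₀ (by linarith) (by linarith)] at hslope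
    have hzsub : z - y = (y - x) * (lam y / d + 1) := by rw [hzdef]; ring
    have hdd : lam y / d * d = lam y := div_mul_cancel₀ _ (ne_of_gt hd0)
    have hlz : 0 ≤ lam z := hnn z hz0
    rw [hzsub] at hslope
    nlinarith [mul_pos h1 hd0]
  -- distribution function of f
  set F : ℝ → ℝ := fun u => μ {i | u ≤ f i} with hFdef
  have hF_antitone : Antitone F := by
    intro u v huv
    exact hmono _ (hIci v) _ (hIci u) (fun i hi => le_trans huv hi)
  have hF_one : ∀ u : ℝ, u ≤ 0 → F u = 1 := by
    intro u hu
    have h : {i | u ≤ f i} = Set.univ := Set.eq_univ_of_forall (fun i => le_trans hu (hf0 i))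
    show μ _ = 1
    rw [h, hone]
  have hF_zero : ∀ u : ℝ, B < u → F u = 0 := by
    intro u hu
    have h : {i | u ≤ f i} = ∅ := by
      ext i
      simp only [Set.mem_setOf_eq, Set.mem_empty_iff_false, iff_false, not_le]
      exact lt_of_le_of_lt (hB i) hu
    show μ _ = 0
    rw [h, hμempty]
  have hF_int : IntegrableOn F (Set.Ioi 0) := antitone_tail_integrableOn hF_antitone hB0 hF_zero
  set m := ∫ t in Set.Ioi (0:ℝ), F t with hmdef
  have hm0 : 0 ≤ m := setIntegral_nonneg measurableSet_Ioi (fun t _ => hpos _ (hIci t))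
  have hm0' : m ∈ Set.Ici (0:ℝ) := Set.mem_Ici.2 hm0
  -- negative layers vanish
  have hzero_neg : ∀ g : I → ℝ, (∀ i, 0 ≤ g i) →
      (∫ t in Set.Ioi (0:ℝ), μ {a | g a ≤ -t}) = 0 := by
    intro g hg
    rw [setIntegral_congr_fun (g := fun _ => (0:ℝ)) measurableSet_Ioi ?_]
    · simp
    · intro t ht
      have h : {a | g a ≤ -t} = ∅ := by
        ext i
        simp only [Set.mem_setOf_eq, Set.mem_empty_iff_false, iff_false, not_le]
        have := hg i
        have ht' : (0:ℝ) < t := ht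
        linarith
      show μ _ = 0
      rw [h, hμempty]
  -- distribution function of lam ∘ f
  set G : ℝ → ℝ := fun t => μ {i | t ≤ lam (f i)} with hGdef
  have hGmem : ∀ t : ℝ, {i | t ≤ lam (f i)} ∈ 𝒜 := by
    intro t
    by_cases hS : ∃ x : ℝ, 0 ≤ x ∧ t ≤ lam x
    · set S := {x : ℝ | 0 ≤ x ∧ t ≤ lam x} with hSdef
      have hSne : S.Nonempty := hS
      have hSbdd : BddBelow S := ⟨0, fun x hx => hx.1⟩
      have hSclosed : IsClosed S := by
        have h : S = Set.Ici (0:ℝ) ∩ lam ⁻¹' Set.Ici t := by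
          ext x
          simp [hSdef, Set.mem_Ici]
        rw [h]
        exact hcont.preimage_isClosed_of_isClosed isClosed_Ici isClosed_Ici
      have hcS : sInf S ∈ S := hSclosed.csInf_mem hSne hSbdd
      have h : {i | t ≤ lam (f i)} = {i | sInf S ≤ f i} := by
        ext i
        simp only [Set.mem_setOf_eq]
        constructor
        · intro h
          exact csInf_le hSbdd ⟨hf0 i, h⟩
        · intro h
          exact le_trans hcS.2 (hlam_mono hcS.1 (Set.mem_Ici.2 (hf0 i)) h)
      rw [h]
      exact hIci _
    · push_neg at hS
      have h : {i | t ≤ lam (f i)} = ∅ := by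
        ext i
        simp only [Set.mem_setOf_eq, Set.mem_empty_iff_false, iff_false, not_le]
        exact hS (f i) (hf0 i)
      rw [h]
      exact hempty
  have hG_antitone : Antitone G := by
    intro u v huv
    exact hmono _ (hGmem v) _ (hGmem u) (fun i hi => le_trans huv hi)
  have hlamB0 : 0 ≤ lam B := hnn B (Set.mem_Ici.2 hB0)
  have hG_zero : ∀ t : ℝ, lam B < t → G t = 0 := by
    intro t ht
    have h : {i | t ≤ lam (f i)} = ∅ := by
      ext i
      simp only [Set.mem_setOf_eq, Set.mem_empty_iff_false, iff_false, not_le]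
      exact lt_of_le_of_lt (hlam_mono (Set.mem_Ici.2 (hf0 i)) (Set.mem_Ici.2 hB0) (hB i)) ht
    show μ _ = 0
    rw [h, hμempty]
  have hG_int : IntegrableOn G (Set.Ioi 0) :=
    antitone_tail_integrableOn hG_antitone hlamB0 hG_zero
  -- the key estimate, for every ε > 0
  have key : ∀ ε : ℝ, 0 < ε → (∫ t in Set.Ioi (0:ℝ), G t) ≤ lam (m + ε) + ε * m := by
    intro ε hε
    have hmε : m + ε ∈ Set.Ici (0:ℝ) := Set.mem_Ici.2 (by linarith)
    set s := (lam (m + ε) - lam m) / ε with hsdef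
    have hlm : lam m ≤ lam (m + ε) := hlam_mono hm0' hmε (by linarith)
    have hs0 : 0 ≤ s := div_nonneg (by linarith) hε.le
    -- the supporting line
    have hline : ∀ x : ℝ, 0 ≤ x → lam x ≤ lam (m + ε) + s * (x - m) := by
      intro x hx
      rcases lt_or_ge x m with hxm | hxm
      · have hslope := hconc.slope_anti_adjacent (Set.mem_Ici.2 hx) hmε hxm
          (by linarith : m < m + ε)
        rw [show m + ε - m = ε by ring,
          div_le_div_iff₀ hε (by linarith : (0:ℝ) < m - x)] at hslope
        have hgoal : (lam x - lam (m + ε)) * ε ≤ (lam (m + ε) - lam m) * (x - m) := by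
          nlinarith [mul_nonneg (sub_nonneg.2 hlm) hε.le]
        have h2 : lam x - lam (m + ε) ≤ s * (x - m) := by
          rw [hsdef, div_mul_eq_mul_div, le_div_iff₀ hε]
          linarith
        linarith
      · rcases le_or_gt x (m + ε) with hxε | hxε
        · have h1 : lam x ≤ lam (m + ε) := hlam_mono (Set.mem_Ici.2 hx) hmε hxε
          have h2 : 0 ≤ s * (x - m) := mul_nonneg hs0 (by linarith)
          linarith
        · have hslope := hconc.slope_anti_adjacent hm0' (Set.mem_Ici.2 hx)
            (by linarith : m < m + ε) hxε
          rw [show m + ε - m = ε by ring] at hslope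
          rw [div_le_iff₀ (by linarith : (0:ℝ) < x - (m + ε)), ← hsdef] at hslope
          nlinarith [mul_nonneg hs0 hε.le]
    set a := s + ε with hadef
    have ha0 : 0 < a := by rw [hadef]; linarith
    set b := lam (m + ε) - s * m with hbdef
    have hb0 : 0 ≤ b := by
      have h1 := hline 0 le_rfl
      have h2 := hnn 0 (Set.mem_Ici.2 le_rfl)
      rw [hbdef]
      nlinarith
    -- the affine majorant a*x + b of lam on [0,∞)
    have hlineab : ∀ x : ℝ, 0 ≤ x → lam x ≤ a * x + b := by
      intro x hx
      have h1 := hline x hx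
      have h2 : 0 ≤ ε * x := mul_nonneg hε.le hx
      rw [hadef, hbdef]
      nlinarith
    -- comparison of layer functions
    have hcomp : ∀ t ∈ Set.Ioi (0:ℝ), G t ≤ F ((t - b) / a) := by
      intro t _
      apply hmono _ (hGmem t) _ (hIci _)
      intro i hi
      have hi' : t ≤ lam (f i) := hi
      have h1 := hlineab (f i) (hf0 i)
      show (t - b) / a ≤ f i
      rw [div_le_iff₀ ha0]
      nlinarith
    set D : ℝ → ℝ := fun t => F ((t - b) / a) with hDdef
    have hD_anti : Antitone D := by
      intro t u htu
      exact hF_antitone ((div_le_div_iff_of_pos_right ha0).2 (by linarith))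
    have hD_zero : ∀ t : ℝ, a * B + b < t → D t = 0 := by
      intro t ht
      apply hF_zero
      rw [lt_div_iff₀ ha0]
      linarith
    have hab0 : 0 ≤ a * B + b := by nlinarith
    have hD_int : IntegrableOn D (Set.Ioi 0) :=
      antitone_tail_integrableOn hD_anti hab0 hD_zero
    have hGD : (∫ t in Set.Ioi (0:ℝ), G t) ≤ ∫ t in Set.Ioi (0:ℝ), D t :=
      setIntegral_mono_on hG_int hD_int measurableSet_Ioi hcomp
    -- compute the integral of D
    have hD_int2 : IntegrableOn D (Set.Ioi b) :=
      antitone_tail_integrableOn hD_anti (by nlinarith : b ≤ a * B + b) hD_zero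
    have hD_int1 : IntegrableOn D (Set.Ioc 0 b) := by
      apply hD_int.mono_set
      exact Set.Ioc_subset_Ioi_self
    have hsplit : (∫ t in Set.Ioi (0:ℝ), D t) =
        (∫ t in Set.Ioc (0:ℝ) b, D t) + ∫ t in Set.Ioi b, D t := by
      rw [← Set.Ioc_union_Ioi_eq_Ioi hb0]
      exact setIntegral_union Set.Ioc_disjoint_Ioi_same measurableSet_Ioi hD_int1 hD_int2
    have hpiece1 : (∫ t in Set.Ioc (0:ℝ) b, D t) = b := by
      rw [setIntegral_congr_fun (g := fun _ => (1:ℝ)) measurableSet_Ioc ?_]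
      · simp [Real.volume_Ioc, ENNReal.toReal_ofReal hb0, hb0]
      · intro t ht
        exact hF_one _ (div_nonpos_of_nonpos_of_nonneg (by linarith [ht.2]) ha0.le)
    have hpiece2 : (∫ t in Set.Ioi b, D t) = a * m := by
      have himg : (fun t => (t - b) / a) '' Set.Ioi b = Set.Ioi 0 := by
        ext u
        simp only [Set.mem_image, Set.mem_Ioi]
        constructor
        · rintro ⟨t, ht, rfl⟩
          exact div_pos (by linarith) ha0
        · intro hu
          exact ⟨a * u + b, by nlinarith, by field_simp; ring⟩
      have hderiv : ∀ t ∈ Set.Ioi b, HasDerivWithinAt (fun t => (t - b) / a) a⁻¹ (Set.Ioi b) t := by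
        intro t _
        have h : HasDerivAt (fun t : ℝ => (t - b) / a) (1 / a) t := by
          simpa using ((hasDerivAt_id t).sub_const b).div_const a
        simpa [one_div] using h.hasDerivWithinAt
      have hinj : Set.InjOn (fun t => (t - b) / a) (Set.Ioi b) := by
        intro t₁ _ t₂ _ h
        field_simp at h
        linarith
      have h := integral_image_eq_integral_abs_deriv_smul measurableSet_Ioi hderiv hinj F
      rw [himg] at h
      rw [← hmdef] at h
      simp only [abs_of_pos (inv_pos.2 ha0), smul_eq_mul] at h
      rw [MeasureTheory.integral_const_mul] at h
      show (∫ t in Set.Ioi b, F ((t - b) / a)) = a * m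
      field_simp at h
      linarith [h]
    have hcalc : (∫ t in Set.Ioi (0:ℝ), D t) = lam (m + ε) + ε * m := by
      rw [hsplit, hpiece1, hpiece2, hadef, hbdef]
      ring
    linarith
  -- pass to the limit ε → 0⁺
  have hmain : (∫ t in Set.Ioi (0:ℝ), G t) ≤ lam m := by
    have hlim : Filter.Tendsto (fun ε : ℝ => lam (m + ε) + ε * m)
        (nhdsWithin 0 (Set.Ioi 0)) (nhds (lam m)) := by
      have h1 : Filter.Tendsto (fun ε : ℝ => m + ε) (nhdsWithin 0 (Set.Ioi 0))
          (nhdsWithin m (Set.Ici 0)) := by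
        apply tendsto_nhdsWithin_of_tendsto_nhds_of_eventually_within
        · have : Filter.Tendsto (fun ε : ℝ => m + ε) (nhds 0) (nhds (m + 0)) :=
            (continuous_const.add continuous_id).tendsto 0
          simpa using this.mono_left nhdsWithin_le_nhds
        · filter_upwards [self_mem_nhdsWithin] with ε hε
          have : (0:ℝ) < ε := hε
          exact Set.mem_Ici.2 (by linarith)
      have h2 : Filter.Tendsto lam (nhdsWithin m (Set.Ici 0)) (nhds (lam m)) :=
        hcont m hm0'
      have h3 : Filter.Tendsto (fun ε : ℝ => ε * m) (nhdsWithin 0 (Set.Ioi 0)) (nhds 0) := by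
        have : Filter.Tendsto (fun ε : ℝ => ε * m) (nhds 0) (nhds (0 * m)) :=
          (continuous_id.mul continuous_const).tendsto 0
        simpa using this.mono_left nhdsWithin_le_nhds
      have := (h2.comp h1).add h3
      simpa using this
    refine ge_of_tendsto hlim ?_
    filter_upwards [self_mem_nhdsWithin] with ε hε
    exact key ε hε
  -- put everything together
  show (∫ t in Set.Ioi (0:ℝ), μ {i | t ≤ lam (f i)}) -
      (∫ t in Set.Ioi (0:ℝ), μ {i | lam (f i) ≤ -t}) ≤
      lam ((∫ t in Set.Ioi (0:ℝ), μ {i | t ≤ f i}) -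
      (∫ t in Set.Ioi (0:ℝ), μ {i | f i ≤ -t}))
  rw [hzero_neg f hf0, hzero_neg (fun i => lam (f i)) (fun i => hnn (f i) (Set.mem_Ici.2 (hf0 i))),
    sub_zero, sub_zero]
  exact hmain
end

section
/- (Density of separating affine subspaces) Let K be a compact convex subset of a locally convex topological vector space. Any linear subspace of the space A(K) of continuous affine real functions on K that contains the constant functions and separates the points of K is dense in A(K) with respect to the supremum norm. -/
/-- A real function on a convex set `K` is affine if it sends convex
combinations to convex combinations. -/
def AffineOnK {E : Type*} [AddCommGroup E] [Module ℝ E] (K : Set E)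
    (hK : Convex ℝ K) (f : K → ℝ) : Prop :=
  ∀ (x y : K) (t : ℝ) (ht0 : 0 ≤ t) (ht1 : t ≤ 1),
    f ⟨t • (x : E) + (1 - t) • (y : E),
        hK x.2 y.2 ht0 (by linarith) (by ring)⟩ = t * f x + (1 - t) * f y

/-- A continuous linear functional on a product `ι → ℝ` is determined by
finitely many coordinates. -/
lemma pi_clm_finite {ι : Type*} [DecidableEq ι] (ℓ : (ι → ℝ) →L[ℝ] ℝ) :
    ∃ S : Finset ι, ∀ v : ι → ℝ, ℓ v = ∑ i ∈ S, v i * ℓ (Pi.single i 1) := by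
  classical
  have hopen : IsOpen (ℓ ⁻¹' Metric.ball (0 : ℝ) 1) :=
    Metric.isOpen_ball.preimage ℓ.continuous
  have h0 : (0 : ι → ℝ) ∈ ℓ ⁻¹' Metric.ball 0 1 := by simp
  obtain ⟨I, u, hu, hsub⟩ := (isOpen_pi_iff.mp hopen) 0 h0
  refine ⟨I, fun v => ?_⟩
  have key : ∀ w : ι → ℝ, (∀ i ∈ I, w i = 0) → ℓ w = 0 := by
    intro w hw
    by_contra h
    have hmem : ∀ t : ℝ, t • w ∈ (I : Set ι).pi u := by
      intro t i hi
      have hwi : w i = 0 := hw i hi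
      have : (t • w) i = 0 := by simp [hwi]
      rw [this]
      exact (hu i hi).2
    have hball : ∀ t : ℝ, dist (ℓ (t • w)) 0 < 1 := fun t => hsub (hmem t)
    have h2 := hball (2 / ℓ w)
    rw [map_smul, smul_eq_mul, div_mul_cancel₀ _ h, Real.dist_eq] at h2
    norm_num at h2
  have hdecomp : ℓ (v - ∑ i ∈ I, v i • (Pi.single i 1 : ι → ℝ)) = 0 := by
    apply key
    intro j hj
    simp only [Pi.sub_apply, Finset.sum_apply, Pi.smul_apply, smul_eq_mul]
    rw [Finset.sum_eq_single j]
    · simp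
    · intro i hi hij
      simp [Pi.single_eq_of_ne (Ne.symm hij)]
    · intro h; exact absurd hj h
  have hms := map_sub ℓ v (∑ i ∈ I, v i • (Pi.single i 1 : ι → ℝ))
  rw [hdecomp] at hms
  have : ℓ v = ℓ (∑ i ∈ I, v i • (Pi.single i 1 : ι → ℝ)) := by linarith [sub_eq_zero.mp hms.symm]
  rw [this, map_sum]
  exact Finset.sum_congr rfl fun i _ => by rw [map_smul, smul_eq_mul]

/-- Density of separating affine subspaces: if `K` is a compact
convex subset of a locally convex space and `X` is a linear subspace of the
continuous affine functions `A(K)` containing the constants and separating the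
points of `K`, then `X` is dense in `A(K)` in the supremum norm. -/
theorem affine_subspace_dense {E : Type*} [AddCommGroup E] [Module ℝ E]
    [TopologicalSpace E] [IsTopologicalAddGroup E] [ContinuousSMul ℝ E]
    [LocallyConvexSpace ℝ E]
    (K : Set E) (hKc : IsCompact K) (hKconv : Convex ℝ K)
    (X : Submodule ℝ C(K, ℝ))
    (haff : ∀ f ∈ X, AffineOnK K hKconv f)
    (hconst : ∀ c : ℝ, (ContinuousMap.const K c) ∈ X)
    (hsep : ∀ x y : K, x ≠ y → ∃ f ∈ X, f x ≠ f y) :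
    ∀ g : C(K, ℝ), AffineOnK K hKconv g →
      ∀ ε > (0 : ℝ), ∃ f ∈ X, ∀ x : K, |g x - f x| ≤ ε := by
  classical
  intro g hg ε hε
  by_cases hKne : Nonempty K
  swap
  · exact ⟨0, X.zero_mem, fun x => (hKne ⟨x⟩).elim⟩
  haveI : CompactSpace K := isCompact_iff_compactSpace.mp hKc
  -- the evaluation embedding into ℝ^X × ℝ (graph of g over the embedded K)
  set ι := ↥X with hι
  let Φ : K → (ι → ℝ) := fun x i => (i : C(K, ℝ)) x
  let Γ : K → (ι → ℝ) × ℝ := fun x => (Φ x, g x)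
  have hΓcont : Continuous Γ := by
    refine Continuous.prodMk ?_ g.continuous
    exact continuous_pi fun i => (i : C(K, ℝ)).continuous
  have hGcomp : IsCompact (Set.range Γ) := isCompact_range hΓcont
  have hGconv : Convex ℝ (Set.range Γ) := by
    rintro _ ⟨p, rfl⟩ _ ⟨q, rfl⟩ a b ha hb hab
    have hb' : b = 1 - a := by linarith
    have ha1 : a ≤ 1 := by linarith
    subst hb'
    refine ⟨⟨a • (p : E) + (1 - a) • (q : E),
      hKconv p.2 q.2 ha (by linarith) (by ring)⟩, ?_⟩
    refine Prod.ext ?_ ?_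
    · funext i
      have h := haff (i : C(K, ℝ)) i.2 p q a ha ha1
      simpa [Γ, Φ, Prod.fst_add, Prod.smul_fst, Pi.add_apply, Pi.smul_apply,
        smul_eq_mul] using h
    · have h := hg p q a ha ha1
      simpa [Γ, Prod.snd_add, Prod.smul_snd, smul_eq_mul] using h
  -- translated copy
  let T : Set ((ι → ℝ) × ℝ) := (fun w => ((0 : ι → ℝ), ε) + w) '' Set.range Γ
  have hTcomp : IsCompact T := hGcomp.image (continuous_const.add continuous_id)
  have hTconv : Convex ℝ T := hGconv.translate _
  have hTclosed : IsClosed T := hTcomp.isClosed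
  have hdisj : Disjoint (Set.range Γ) T := by
    rw [Set.disjoint_left]
    rintro _ ⟨x, rfl⟩ ⟨_, ⟨y, rfl⟩, heq⟩
    have h1 : Φ y = Φ x := by
      have := congrArg Prod.fst heq
      simpa using this
    have hxy : x = y := by
      by_contra hne
      obtain ⟨f, hfX, hf⟩ := hsep x y hne
      have := congrFun h1 ⟨f, hfX⟩
      exact hf this.symm
    have h2 : ε + g y = g x := by
      have := congrArg Prod.snd heq
      simpa using this
    rw [hxy] at h2
    linarith
  obtain ⟨L, u, v, hLs, huv, hLt⟩ :=
    geometric_hahn_banach_compact_closed hGconv hGcomp hTconv hTclosed hdisj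
  set s : ℝ := L ((0 : ι → ℝ), 1) with hs_def
  have hL_split : ∀ w : (ι → ℝ) × ℝ, L (((0 : ι → ℝ), ε) + w) = L w + ε * s := by
    intro w
    have : ((0 : ι → ℝ), ε) = ε • (((0 : ι → ℝ), 1) : (ι → ℝ) × ℝ) := by
      simp [Prod.ext_iff]
    rw [map_add, this, map_smul, smul_eq_mul]
    ring
  have hs_pos : 0 < s := by
    obtain ⟨x0⟩ := hKne
    have h1 : L (Γ x0) < u := hLs _ ⟨x0, rfl⟩
    have h2 : v < L (((0 : ι → ℝ), ε) + Γ x0) := hLt _ ⟨_, ⟨x0, rfl⟩, rfl⟩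
    rw [hL_split] at h2
    nlinarith
  -- the linear part in the ℝ^X direction
  let ℓ : (ι → ℝ) →L[ℝ] ℝ := L.comp (ContinuousLinearMap.inl ℝ (ι → ℝ) ℝ)
  have hLΓ : ∀ x : K, L (Γ x) = ℓ (Φ x) + g x * s := by
    intro x
    have : Γ x = ((Φ x, 0) : (ι → ℝ) × ℝ) + (g x) • (((0 : ι → ℝ), 1)) := by
      simp [Γ, Prod.ext_iff]
    rw [this, map_add, map_smul, smul_eq_mul]
    rfl
  obtain ⟨S, hS⟩ := pi_clm_finite (ι := ι) ℓ
  -- the approximating element of X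
  let f : C(K, ℝ) := ContinuousMap.const K (u / s) -
    s⁻¹ • ∑ i ∈ S, (ℓ (Pi.single i 1)) • (i : C(K, ℝ))
  have hfX : f ∈ X :=
    X.sub_mem (hconst _) (X.smul_mem _ (X.sum_mem fun i _ => X.smul_mem _ i.2))
  refine ⟨f, hfX, fun x => ?_⟩
  have hfx : f x = u / s - s⁻¹ * ℓ (Φ x) := by
    have hsum : (∑ i ∈ S, (ℓ (Pi.single i 1)) • (i : C(K, ℝ))) x
        = ∑ i ∈ S, (ℓ (Pi.single i 1)) * (i : C(K, ℝ)) x := by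
      simp
    have hℓΦ : ℓ (Φ x) = ∑ i ∈ S, (ℓ (Pi.single i 1)) * (i : C(K, ℝ)) x := by
      rw [hS (Φ x)]
      exact Finset.sum_congr rfl fun i _ => mul_comm _ _
    simp only [f, ContinuousMap.sub_apply, ContinuousMap.const_apply,
      ContinuousMap.smul_apply, smul_eq_mul, hsum, ← hℓΦ]
  have h1 : ℓ (Φ x) + g x * s < u := by
    have := hLs _ ⟨x, rfl⟩
    rwa [hLΓ x] at this
  have h2 : u < ℓ (Φ x) + g x * s + ε * s := by
    have := hLt _ ⟨_, ⟨x, rfl⟩, rfl⟩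
    rw [hL_split, hLΓ x] at this
    linarith
  rw [hfx, abs_le]
  constructor
  · -- -ε ≤ g x - (u/s - s⁻¹ ℓΦx)
    have : u / s < s⁻¹ * ℓ (Φ x) + g x + ε := by
      rw [div_lt_iff₀ hs_pos]
      have : (s⁻¹ * ℓ (Φ x) + g x + ε) * s = ℓ (Φ x) * (s⁻¹ * s) + g x * s + ε * s := by
        ring
      rw [this, inv_mul_cancel₀ (ne_of_gt hs_pos), mul_one]
      linarith
    linarith
  · have h3 : g x * s < u - ℓ (Φ x) := by linarith
    have h4 : g x < (u - ℓ (Φ x)) / s := (lt_div_iff₀ hs_pos).mpr h3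
    have h5 : (u - ℓ (Φ x)) / s = u / s - s⁻¹ * ℓ (Φ x) := by ring
    linarith [h5 ▸ h4]
end
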